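/- arXiv:1611.07513 — 4 statements merged into one kernel-verified Lean document; each statement's English description precedes it below -/
import Mathlib

section
/- Let G be a graph with a cut-vertex v, let W_1, …, W_k be the vertex sets of the connected components of G − v, and for each i let G_i be the subgraph of G induced on W_i ∪ {v}. Then Z(G) ≥ (∑_{i=1}^k Z(G_i)) − k + 1. -/
/-- The zero forcing closure: vertices that eventually become black when the
vertices of `S` are initially black and we repeatedly apply the rule that a
white vertex `u` becomes black if it is the unique white neighbor of some black
vertex `v` (we say `v` forces `u`). -/
inductive ZFClosure {V : Type*} (G : SimpleGraph V) (S : Set V) : V → Prop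
  | init (v : V) : v ∈ S → ZFClosure G S v
  | force (u v : V) : G.Adj v u → ZFClosure G S v →
      (∀ w, G.Adj v w → w ≠ u → ZFClosure G S w) → ZFClosure G S u

/-- `S` is a zero forcing set of `G` if every vertex eventually becomes black. -/
def IsZeroForcingSet {V : Type*} (G : SimpleGraph V) (S : Set V) : Prop :=
  ∀ v, ZFClosure G S v

/-- The zero forcing number `Z(G)`: the minimum cardinality of a zero forcing set. -/
noncomputable def zeroForcingNumber {V : Type*} (G : SimpleGraph V) : ℕ :=
  sInf {k | ∃ S : Set V, S.ncard = k ∧ IsZeroForcingSet G S}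

/-- If any closure statement in `G` restricted to a "component with `v`" can be
initialized, it propagates to the induced subgraph. -/
lemma ZF.push_closure {V : Type*} (G : SimpleGraph V) (B : Set V) (v : V) (Wi : Set V)
    (hN : ∀ x u, u ∈ Wi → G.Adj x u → x ∈ insert v Wi)
    (Ssub : Set ↥(insert v Wi))
    (hB : ∀ u, u ∈ B → ∀ h : u ∈ insert v Wi,
      ZFClosure (G.induce (insert v Wi)) Ssub ⟨u, h⟩)
    (hv : ∀ h : v ∈ insert v Wi, ZFClosure (G.induce (insert v Wi)) Ssub ⟨v, h⟩) :
    ∀ u, ZFClosure G B u → ∀ h : u ∈ insert v Wi,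
      ZFClosure (G.induce (insert v Wi)) Ssub ⟨u, h⟩ := by
  intro u hu
  induction hu with
  | init w hw => exact hB w hw
  | force u x hadj hx hws ihx ihw =>
    intro h
    by_cases huv : u = v
    · subst huv; exact hv h
    · have hu' : u ∈ Wi := h.resolve_left huv
      have hxmem : x ∈ insert v Wi := hN x u hu' hadj
      refine ZFClosure.force _ ⟨x, hxmem⟩ hadj (ihx hxmem) ?_
      intro w hwadj hwne
      exact ihw ↑w hwadj (fun e => hwne (Subtype.ext e)) w.2

/-- If `v ∉ B` and `v` is in the closure of `B`, then for some component `j`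
the trace of `B` already forces `v` inside `G_j`. -/
lemma ZF.exists_comp {V : Type*} (G : SimpleGraph V) (v : V) (k : ℕ) (W : Fin k → Set V)
    (hWcover : ∀ w, w ≠ v → ∃ i, w ∈ W i)
    (hWsep : ∀ i j, i ≠ j → ∀ x ∈ W i, ∀ y ∈ W j, ¬ G.Adj x y)
    (B : Set V) (hvB : v ∉ B) :
    ∀ u, ZFClosure G B u →
      (∃ j, ZFClosure (G.induce (insert v (W j))) {x | ↑x ∈ B}
        ⟨v, Set.mem_insert v _⟩) ∨
      (u ≠ v ∧ ∀ j (hj : u ∈ W j),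
        ZFClosure (G.induce (insert v (W j))) {x | ↑x ∈ B}
          ⟨u, Set.mem_insert_of_mem v hj⟩) := by
  intro u hu
  induction hu with
  | init w hw =>
    exact Or.inr ⟨fun e => hvB (e ▸ hw), fun j hj => ZFClosure.init _ hw⟩
  | force u x hadj hx hws ihx ihw =>
    by_cases hL : ∃ j, ZFClosure (G.induce (insert v (W j))) {x | ↑x ∈ B}
        ⟨v, Set.mem_insert v _⟩
    · exact Or.inl hL
    have hx' := ihx.resolve_left hL
    by_cases huv : u = v
    · subst huv
      obtain ⟨j, hxj⟩ := hWcover x hx'.1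
      refine Or.inl ⟨j, ?_⟩
      refine ZFClosure.force _ ⟨x, Set.mem_insert_of_mem u hxj⟩ hadj (hx'.2 j hxj) ?_
      intro w hwadj hwne
      have hwv : (↑w : V) ≠ u := fun e => hwne (Subtype.ext e)
      have hR := (ihw ↑w hwadj hwv).resolve_left hL
      have hwj : (↑w : V) ∈ W j := (Set.mem_insert_iff.mp w.2).resolve_left hwv
      exact hR.2 j hwj
    · refine Or.inr ⟨huv, fun j' hj' => ?_⟩
      have hxv : x ≠ v := hx'.1
      obtain ⟨j'', hxj''⟩ := hWcover x hxv
      have hjj : j'' = j' := by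
        by_contra hne
        exact hWsep j'' j' hne x hxj'' u hj' hadj
      subst hjj
      refine ZFClosure.force _ ⟨x, Set.mem_insert_of_mem v hxj''⟩ hadj (hx'.2 _ hxj'') ?_
      intro w hwadj hwne
      have hwu : (↑w : V) ≠ u := fun e => hwne (Subtype.ext e)
      have hR := (ihw ↑w hwadj hwu).resolve_left hL
      rcases Set.mem_insert_iff.mp w.2 with hwv | hwj
      · exact absurd hwv hR.1
      · exact hR.2 _ hwj

lemma ZF.ncard_sub {V : Type*} [Fintype V] (s t : Set V) :
    {x : ↥t | (x : V) ∈ s}.ncard = (s ∩ t).ncard := by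
  have h : {x : ↥t | (x : V) ∈ s} = (Subtype.val : ↥t → V) ⁻¹' s := rfl
  rw [h, ← Set.ncard_image_of_injective _ Subtype.val_injective,
    Subtype.image_preimage_coe, Set.inter_comm]

lemma ZF.sum_ncard_le {V : Type*} [Fintype V] (k : ℕ) (s : Fin k → Set V) (T : Set V)
    (hsub : ∀ i, s i ⊆ T) (hdisj : ∀ i j, i ≠ j → Disjoint (s i) (s j)) :
    ∑ i, (s i).ncard ≤ T.ncard := by
  classical
  calc ∑ i, (s i).ncard = ∑ i, (s i).toFinset.card := by
        simp [Set.ncard_eq_toFinset_card']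
    _ = (Finset.univ.biUnion fun i => (s i).toFinset).card := by
        rw [Finset.card_biUnion]
        intro i _ j _ hij
        simpa [Set.disjoint_toFinset] using hdisj i j hij
    _ ≤ T.toFinset.card := by
        apply Finset.card_le_card
        intro x hx
        simp only [Finset.mem_biUnion, Set.mem_toFinset] at hx ⊢
        obtain ⟨i, _, hi⟩ := hx
        exact hsub i hi
    _ = T.ncard := (Set.ncard_eq_toFinset_card' T).symm

/-- Row's theorem: if `v` is a cut-vertex of the connected graph `G` and
`W 0, …, W (k-1)` are the vertex sets of the connected components of `G - v`,
with `G_i` the subgraph induced on `W i ∪ {v}`, then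
`Z(G) ≥ (∑ i, Z(G_i)) - k + 1` (stated without truncated subtraction as
`(∑ i, Z(G_i)) + 1 ≤ Z(G) + k`). -/
theorem zeroForcingNumber_cutVertex {V : Type*} [Fintype V] (G : SimpleGraph V)
    (hG : G.Connected) (v : V) (k : ℕ) (hk : 2 ≤ k) (W : Fin k → Set V)
    (hWne : ∀ i, (W i).Nonempty)
    (hWv : ∀ i, v ∉ W i)
    (hWdisj : ∀ i j, i ≠ j → Disjoint (W i) (W j))
    (hWcover : ∀ w, w ≠ v → ∃ i, w ∈ W i)
    (hWconn : ∀ i, (G.induce (W i)).Connected)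
    (hWsep : ∀ i j, i ≠ j → ∀ x ∈ W i, ∀ y ∈ W j, ¬ G.Adj x y) :
    (∑ i : Fin k, zeroForcingNumber (G.induce (insert v (W i)))) + 1 ≤
      zeroForcingNumber G + k := by
  classical
  -- a minimum zero forcing set
  have hne : {n | ∃ S : Set V, S.ncard = n ∧ IsZeroForcingSet G S}.Nonempty :=
    ⟨(Set.univ : Set V).ncard, Set.univ, rfl, fun u => ZFClosure.init u (Set.mem_univ u)⟩
  obtain ⟨B, hBcard, hBZFS⟩ := Nat.sInf_mem hne
  have hBval : B.ncard = zeroForcingNumber G := hBcard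
  -- closed neighborhoods stay inside components
  have hN : ∀ i, ∀ x u, u ∈ W i → G.Adj x u → x ∈ insert v (W i) := by
    intro i x u hu hadj
    by_cases hxv : x = v
    · exact Or.inl hxv
    · obtain ⟨j, hxj⟩ := hWcover x hxv
      by_cases hji : j = i
      · exact Or.inr (hji ▸ hxj)
      · exact absurd hadj (hWsep j i hji x hxj u hu)
  -- for every component, the trace of `insert v B` is a zero forcing set
  have hZFSi : ∀ i, IsZeroForcingSet (G.induce (insert v (W i)))
      {x : ↥(insert v (W i)) | (x : V) ∈ insert v B} := by
    intro i w
    exact ZF.push_closure G B v (W i) (hN i) _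
      (fun u hu h => ZFClosure.init _ (Set.mem_insert_of_mem v hu))
      (fun h => ZFClosure.init _ (Set.mem_insert v B)) ↑w (hBZFS ↑w) w.2
  -- bound for each component
  have hZi : ∀ i, zeroForcingNumber (G.induce (insert v (W i))) ≤ (B ∩ W i).ncard + 1 := by
    intro i
    have h1 : zeroForcingNumber (G.induce (insert v (W i))) ≤
        {x : ↥(insert v (W i)) | (x : V) ∈ insert v B}.ncard :=
      Nat.sInf_le ⟨_, rfl, hZFSi i⟩
    have h2 : (insert v B ∩ insert v (W i)) = insert v (B ∩ W i) := by
      ext x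
      simp only [Set.mem_inter_iff, Set.mem_insert_iff]
      tauto
    calc zeroForcingNumber (G.induce (insert v (W i))) ≤ _ := h1
      _ = (insert v (B ∩ W i)).ncard := by rw [ZF.ncard_sub, h2]
      _ ≤ (B ∩ W i).ncard + 1 := Set.ncard_insert_le _ _
  by_cases hvB : v ∈ B
  · -- v is in the minimum zero forcing set
    have hsum : ∑ i, (B ∩ W i).ncard ≤ (B \ {v}).ncard := by
      apply ZF.sum_ncard_le
      · intro i x hx
        exact ⟨hx.1, fun e => hWv i (Set.mem_singleton_iff.mp e ▸ hx.2)⟩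
      · intro i j hij
        exact (hWdisj i j hij).mono Set.inter_subset_right Set.inter_subset_right
    have hBsplit : (insert v (B \ {v})).ncard = (B \ {v}).ncard + 1 :=
      Set.ncard_insert_of_notMem (fun h => h.2 rfl) (Set.toFinite _)
    rw [Set.insert_diff_singleton, Set.insert_eq_self.mpr hvB] at hBsplit
    calc (∑ i : Fin k, zeroForcingNumber (G.induce (insert v (W i)))) + 1
        ≤ (∑ i : Fin k, ((B ∩ W i).ncard + 1)) + 1 := by
          exact Nat.add_le_add_right (Finset.sum_le_sum fun i _ => hZi i) 1
      _ = (∑ i : Fin k, (B ∩ W i).ncard) + k + 1 := by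
          rw [Finset.sum_add_distrib, Finset.sum_const, Finset.card_univ, Fintype.card_fin,
            smul_eq_mul, mul_one]
      _ ≤ (B \ {v}).ncard + k + 1 := by omega
      _ = B.ncard + k := by omega
      _ = zeroForcingNumber G + k := by rw [hBval]
  · -- v is not in the minimum zero forcing set
    obtain ⟨j, hvj⟩ := (ZF.exists_comp G v k W hWcover hWsep B hvB v (hBZFS v)).resolve_right
      (fun h => h.1 rfl)
    -- the trace of B alone forces G_j
    have hZFSj : IsZeroForcingSet (G.induce (insert v (W j)))
        {x : ↥(insert v (W j)) | (x : V) ∈ B} := by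
      intro w
      exact ZF.push_closure G B v (W j) (hN j) _
        (fun u hu h => ZFClosure.init _ hu) (fun h => hvj) ↑w (hBZFS ↑w) w.2
    have hZj : zeroForcingNumber (G.induce (insert v (W j))) ≤ (B ∩ W j).ncard := by
      have h1 : zeroForcingNumber (G.induce (insert v (W j))) ≤
          {x : ↥(insert v (W j)) | (x : V) ∈ B}.ncard := Nat.sInf_le ⟨_, rfl, hZFSj⟩
      have h2 : B ∩ insert v (W j) = B ∩ W j := by
        ext x
        simp only [Set.mem_inter_iff, Set.mem_insert_iff]
        constructor
        · rintro ⟨hxB, rfl | hxW⟩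
          · exact absurd hxB hvB
          · exact ⟨hxB, hxW⟩
        · rintro ⟨hxB, hxW⟩; exact ⟨hxB, Or.inr hxW⟩
      rwa [ZF.ncard_sub, h2] at h1
    have hsum : ∑ i, (B ∩ W i).ncard ≤ B.ncard := by
      apply ZF.sum_ncard_le
      · intro i; exact Set.inter_subset_left
      · intro i j' hij
        exact (hWdisj i j' hij).mono Set.inter_subset_right Set.inter_subset_right
    have hlt : (∑ i : Fin k, zeroForcingNumber (G.induce (insert v (W i)))) <
        ∑ i : Fin k, ((B ∩ W i).ncard + 1) := by
      apply Finset.sum_lt_sum (fun i _ => hZi i)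
      exact ⟨j, Finset.mem_univ j, lt_of_le_of_lt hZj (Nat.lt_succ_self _)⟩
    have heq : ∑ i : Fin k, ((B ∩ W i).ncard + 1) = (∑ i : Fin k, (B ∩ W i).ncard) + k := by
      rw [Finset.sum_add_distrib, Finset.sum_const, Finset.card_univ, Fintype.card_fin,
        smul_eq_mul, mul_one]
    omega
end

section
/- With G_n and Ĝ_n as in the binary-tree construction and t_n defined by t_1 = 2, t_{n+1} = 4t_n + 2: for every graph F containing Ĝ_n as an induced subgraph with no edges between V(G_n) and V(F) \ V(G_n), and for every zero forcing set P of F, one has |V(G_n) ∩ P| ≥ t_n. -/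
/-- One-sided edge relation of the subdivided `K₄`: vertices `a b c d e = 0 1 2 3 4`,
edges `ad, db, ac, cb, ae, eb, ce`; here `d = 3` is the subdivision vertex. -/
def subK4Rel : Fin 5 → Fin 5 → Prop := fun x y =>
  (x, y) ∈ [((0 : Fin 5), (3 : Fin 5)), (3, 1), (0, 2), (2, 1), (0, 4), (4, 1), (2, 4)]

/-- The subdivided `K₄`: the complete graph on `{a, b, c, e}` with the edge `ab`
replaced by the path `a–d–b`. -/
def subK4 : SimpleGraph (Fin 5) := SimpleGraph.fromRel subK4Rel

/-- Vertices of the graph `G_{n+1}` of the binary-tree construction: `GV n` is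
obtained from the complete binary tree `B_{2(n+1)-1}` by replacing every leaf with
a subdivided `K₄` (attached via its subdivision vertex `3`).  `GV 0` is a single
subdivided `K₄`; `GV (n+1)` consists of a root, two middle vertices `mid b`
(the vertices `y_n^1, y_n^2`), and four copies `child b c` of `GV n`. -/
inductive GV : ℕ → Type
  | base : Fin 5 → GV 0
  | root {n : ℕ} : GV (n + 1)
  | mid {n : ℕ} : Bool → GV (n + 1)
  | child {n : ℕ} : Bool → Bool → GV n → GV (n + 1)

/-- The root `r_{n+1}` of `G_{n+1}` (for a single subdivided `K₄` it is the
subdivision vertex `3`). -/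
def rootV : (n : ℕ) → GV n
  | 0 => .base 3
  | _ + 1 => .root

/-- One-sided edge relation of `G_{n+1}`: the root is joined to the two middle
vertices, each middle vertex is joined to the roots of its two copies of the
previous construction, and each copy keeps its own edges. -/
def gAdj : {n : ℕ} → GV n → GV n → Prop
  | 0, .base i, .base j => subK4Rel i j
  | _ + 1, .root, .mid _ => True
  | n + 1, .mid b, .child b' _ x => b = b' ∧ x = rootV n
  | _ + 1, .child b c x, .child b' c' y => b = b' ∧ c = c' ∧ gAdj x y
  | _ + 1, _, _ => False

/-- The graph `G_{n+1}` of the binary-tree construction (the complete binary tree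
`B_{2(n+1)-1}` with every leaf replaced by a subdivided `K₄`). -/
def Gtree (n : ℕ) : SimpleGraph (GV n) := SimpleGraph.fromRel gAdj

/-- One-sided edge relation of `Ĝ_{n+1}`: `G_{n+1}` together with one extra pendant
vertex `none` (the vertex `y_{n+1}`) attached to the root. -/
def hatAdj (n : ℕ) : Option (GV n) → Option (GV n) → Prop
  | some x, some y => gAdj x y
  | none, some x => x = rootV n
  | _, _ => False

/-- The graph `Ĝ_{n+1}`: `G_{n+1}` with a new pendant vertex attached to the root. -/
def hatGtree (n : ℕ) : SimpleGraph (Option (GV n)) := SimpleGraph.fromRel (hatAdj n)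

/-- The sequence `t_{n+1}` (0-indexed): `t 0 = t_1 = 2` and `t (n+1) = 4 * t n + 2`. -/
def tseq : ℕ → ℕ
  | 0 => 2
  | n + 1 => 4 * tseq n + 2

/-!
Strengthen the claim: if `P` still forces everything when the pendant vertex `y` may not
force the root `r`, then `|V(G_n) ∩ P| ≥ t_n + 1`. For a subdivided `K₄` both bounds are read off
its forts. In `G_{n+1}` the middle vertex `y^b` forces at most one of the two copy roots below
it (whichever turns black first is not forced by it), so each side holds at least
`2 t_n + 1` vertices of `P`. If moreover `y` does not force `r`, then either `r ∈ P` or some `y^b`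
forces `r` after both copy roots below it are black, and that side holds `2 t_n + 2`.

"`y` does not force `r`" is encoded as zero forcing with the move `y → r` forbidden, which avoids
chronological lists of forces (the graph `F` may be infinite).
-/

open Classical in
lemma Set.ncard_setOf_eq_sum_ite {α : Type*} [Fintype α] (p : α → Prop) :
    {a | p a}.ncard = ∑ a, if p a then 1 else 0 := by
  rw [Set.ncard_eq_toFinset_card', Set.toFinset_ofPred, Finset.card_filter]

section RestrictedForcing

variable {V : Type*} (G : SimpleGraph V)

/-- The zero forcing closure of `S` when the forcing moves `v → u` with `(v, u) ∈ B` are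
forbidden. -/
inductive RestrictedClosure (B : Set (V × V)) (S : Set V) : V → Prop
  | init (v : V) : v ∈ S → RestrictedClosure B S v
  | force (u v : V) : G.Adj v u → (v, u) ∉ B → RestrictedClosure B S v →
      (∀ w, G.Adj v w → w ≠ u → RestrictedClosure B S w) → RestrictedClosure B S u

def IsZeroForcingSetAvoiding (B : Set (V × V)) (S : Set V) : Prop :=
  ∀ v, RestrictedClosure G B S v

def IsForcingClosed (B : Set (V × V)) (T : Set V) : Prop :=
  ∀ u v, G.Adj v u → (v, u) ∉ B → v ∈ T → (∀ w, G.Adj v w → w ≠ u → w ∈ T) → u ∈ T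

variable {G} {B B' : Set (V × V)} {S T : Set V} {u v y r r' : V}

lemma isForcingClosed_restrictedClosure : IsForcingClosed G B {v | RestrictedClosure G B S v} :=
  fun u v huv hB hv hw ↦ .force u v huv hB hv hw

lemma RestrictedClosure.mem_of_isForcingClosed (hST : S ⊆ T) (hT : IsForcingClosed G B T)
    (h : RestrictedClosure G B S v) : v ∈ T := by
  induction h with
  | init v hv => exact hST hv
  | force u v huv hB _ _ ihv ihw => exact hT u v huv hB ihv ihw

lemma RestrictedClosure.exists_force (h : RestrictedClosure G B S u) (hu : u ∉ S) :
    ∃ v, G.Adj v u ∧ (v, u) ∉ B ∧ RestrictedClosure G B S v ∧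
      ∀ w, G.Adj v w → w ≠ u → RestrictedClosure G B S w := by
  cases h with
  | init _ h => exact absurd h hu
  | force _ v huv hB hv hw => exact ⟨v, huv, hB, hv, hw⟩

lemma RestrictedClosure.anti (hBB' : B ⊆ B') (h : RestrictedClosure G B' S v) :
    RestrictedClosure G B S v :=
  h.mem_of_isForcingClosed (fun _ ↦ .init _) fun u v huv hB ↦
    isForcingClosed_restrictedClosure u v huv (fun h ↦ hB (hBB' h))

lemma IsZeroForcingSet.eq_univ (hS : IsZeroForcingSet G S) (hST : S ⊆ T)
    (hT : IsForcingClosed G ∅ T) : T = Set.univ := by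
  refine Set.eq_univ_of_forall fun v ↦ ?_
  induction hS v with
  | init v hv => exact hST hv
  | force u v huv _ _ ihv ihw => exact hT u v huv (Set.notMem_empty _) ihv ihw

lemma IsZeroForcingSet.avoiding_empty (hS : IsZeroForcingSet G S) :
    IsZeroForcingSetAvoiding G ∅ S :=
  Set.eq_univ_iff_forall.1 (hS.eq_univ (fun w ↦ .init w) isForcingClosed_restrictedClosure)

/-- A forbidden move `v → u` costs nothing once `u` is black, or while another neighbour
of `v` is white. -/
lemma IsForcingClosed.of_subset_insert (hT : IsForcingClosed G B T) (hB : B ⊆ insert (v, u) B')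
    (hu : u ∈ T ∨ ∃ w, G.Adj v w ∧ w ≠ u ∧ w ∉ T) : IsForcingClosed G B' T := by
  intro u' v' huv hB' hv hw
  by_cases hmove : (v', u') = (v, u)
  · obtain ⟨rfl, rfl⟩ := Prod.ext_iff.1 hmove
    rcases hu with hu | ⟨w, hvw, hwu, hwT⟩
    · exact hu
    · exact absurd (hw w hvw hwu) hwT
  · exact hT u' v' huv (fun h ↦ (hB h).elim hmove hB') hv hw

lemma IsZeroForcingSet.avoiding_singleton (hS : IsZeroForcingSet G S) (hyr : (y, r) ∈ B)
    (hr : RestrictedClosure G B S r) : IsZeroForcingSetAvoiding G {(y, r)} S := by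
  have hr' : RestrictedClosure G {(y, r)} S r := hr.anti (Set.singleton_subset_iff.2 hyr)
  have hT : IsForcingClosed G ∅ {v | RestrictedClosure G {(y, r)} S v} :=
    isForcingClosed_restrictedClosure.of_subset_insert
      (Set.singleton_subset_iff.2 (Set.mem_insert _ _)) (.inl hr')
  exact Set.eq_univ_iff_forall.1 (hS.eq_univ (fun w ↦ .init w) hT)

/-- Of two neighbours `r ≠ r'` of `y`, whichever turns black first is not forced by `y`. -/
lemma IsZeroForcingSet.avoiding_or (hS : IsZeroForcingSet G S) (hr : G.Adj y r)
    (hr' : G.Adj y r') (hne : r ≠ r') :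
    IsZeroForcingSetAvoiding G {(y, r)} S ∨ IsZeroForcingSetAvoiding G {(y, r')} S := by
  set C := {v | RestrictedClosure G {(y, r), (y, r')} S v}
  by_cases hrC : r ∈ C
  · exact .inl (hS.avoiding_singleton (by simp) hrC)
  by_cases hr'C : r' ∈ C
  · exact .inr (hS.avoiding_singleton (by simp) hr'C)
  have hC : IsForcingClosed G ∅ C :=
    (isForcingClosed_restrictedClosure.of_subset_insert subset_rfl
      (.inr ⟨r', hr', hne.symm, hr'C⟩)).of_subset_insert (by simp) (.inr ⟨r, hr, hne, hrC⟩)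
  exact absurd (hS.eq_univ (fun w ↦ .init w) hC ▸ Set.mem_univ r) hrC

end RestrictedForcing

section Forts

variable {V V' : Type*} {G : SimpleGraph V} {G' : SimpleGraph V'}

def IsFort (G : SimpleGraph V) (R : Set V) : Prop :=
  R.Nonempty ∧ ∀ ⦃v u⦄, v ∉ R → u ∈ R → G.Adj v u → ∃ w ∈ R, w ≠ u ∧ G.Adj v w

lemma IsFort.image (φ : G ≃g G') {R : Set V} (hR : IsFort G R) : IsFort G' (φ '' R) := by
  refine ⟨hR.1.image φ, fun v u hv hu hvu ↦ ?_⟩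
  obtain ⟨u, hu, rfl⟩ := hu
  obtain ⟨v, rfl⟩ := φ.surjective v
  obtain ⟨w, hw, hwu, hvw⟩ :=
    hR.2 (fun h ↦ hv (Set.mem_image_of_mem φ h)) hu (φ.map_adj_iff.1 hvu)
  exact ⟨φ w, Set.mem_image_of_mem φ hw, φ.injective.ne hwu, φ.map_adj_iff.2 hvw⟩

lemma IsZeroForcingSetAvoiding.inter_nonempty {B : Set (V × V)} {S R : Set V}
    (hS : IsZeroForcingSetAvoiding G B S) (hR : R.Nonempty)
    (hfort : ∀ ⦃v u⦄, v ∉ R → u ∈ R → G.Adj v u → (v, u) ∉ B → ∃ w ∈ R, w ≠ u ∧ G.Adj v w) :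
    (R ∩ S).Nonempty := by
  by_contra hRS
  have hSR : S ⊆ Rᶜ := fun v hvS hvR ↦ hRS ⟨v, hvR, hvS⟩
  have hclosed : IsForcingClosed G B Rᶜ := by
    intro u v hvu hB hv hw hu
    obtain ⟨w, hwR, hwu, hvw⟩ := hfort hv hu hvu hB
    exact hw w hvw hwu hwR
  obtain ⟨v, hv⟩ := hR
  exact (hS v).mem_of_isForcingClosed hSR hclosed hv

end Forts

section Tree

variable {n : ℕ} {b b' c c' : Bool} {x y : GV n}

lemma hatGtree_adj_some_some : (hatGtree n).Adj (some x) (some y) ↔ (Gtree n).Adj x y := by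
  simp [hatGtree, Gtree, hatAdj]

lemma hatGtree_adj_none_some : (hatGtree n).Adj none (some x) ↔ x = rootV n := by
  simp [hatGtree, hatAdj]

lemma Gtree_adj_base {i j : Fin 5} : (Gtree 0).Adj (.base i) (.base j) ↔ subK4.Adj i j := by
  simp [Gtree, subK4, gAdj]

lemma Gtree_adj_root_mid : (Gtree (n + 1)).Adj .root (.mid b) := by
  simp [Gtree, gAdj]

lemma Gtree_adj_mid_child :
    (Gtree (n + 1)).Adj (.mid b) (.child b' c x) ↔ b = b' ∧ x = rootV n := by
  simp [Gtree, gAdj]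

lemma Gtree_adj_child_child :
    (Gtree (n + 1)).Adj (.child b c x) (.child b' c' y) ↔ b = b' ∧ c = c' ∧ (Gtree n).Adj x y := by
  simp only [Gtree, SimpleGraph.fromRel_adj, ne_eq, GV.child.injEq, gAdj]
  grind

lemma Gtree_adj_root_iff {v : GV (n + 1)} : (Gtree (n + 1)).Adj v .root ↔ ∃ b, v = .mid b := by
  cases v <;> simp [Gtree, gAdj]

lemma Gtree_adj_child_iff {v : GV (n + 1)} :
    (Gtree (n + 1)).Adj (.child b c x) v ↔
      (∃ y, v = .child b c y ∧ (Gtree n).Adj x y) ∨ (v = .mid b ∧ x = rootV n) := by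
  cases v with
  | child b' c' y => simp [Gtree_adj_child_child, eq_comm, and_assoc]
  | _ => simp [Gtree, gAdj]

end Tree

namespace GV

def zeroEquiv : Fin 5 ≃ GV 0 where
  toFun := base
  invFun | base i => i
  left_inv _ := rfl
  right_inv | base _ => rfl

def zeroIso : subK4 ≃g Gtree 0 := ⟨zeroEquiv, Gtree_adj_base⟩

def succEquiv (n : ℕ) : Option (Bool ⊕ Bool × Bool × GV n) ≃ GV (n + 1) where
  toFun
    | none => root
    | some (.inl b) => mid b
    | some (.inr (b, c, x)) => child b c x
  invFun
    | root => none
    | mid b => some (.inl b)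
    | child b c x => some (.inr (b, c, x))
  left_inv := by rintro (_ | _ | _) <;> rfl
  right_inv := by rintro (_ | _ | _) <;> rfl

instance instFintype : (n : ℕ) → Fintype (GV n)
  | 0 => Fintype.ofEquiv _ zeroEquiv
  | n + 1 => have := instFintype n; Fintype.ofEquiv _ (succEquiv n)

open Classical in
lemma ncard_setOf_succ {n : ℕ} (p : GV (n + 1) → Prop) :
    {a | p a}.ncard = (if p root then 1 else 0) + (if p (mid true) then 1 else 0) +
      (if p (mid false) then 1 else 0) + ∑ b, ∑ c, {x | p (child b c x)}.ncard := by
  simp only [Set.ncard_setOf_eq_sum_ite]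
  rw [← Fintype.sum_equiv (succEquiv n) (fun a ↦ if p (succEquiv n a) then 1 else 0) _
    fun _ ↦ rfl]
  simp only [Fintype.sum_option, Fintype.sum_sum_type, Fintype.sum_prod_type, Fintype.sum_bool,
    succEquiv, Equiv.coe_fn_mk]
  ac_rfl

/-- The embedding of `Ĝ_{n+1}` onto the copy `child b c` of `G_{n+1}` inside `G_{n+2}`
together with its parent `mid b`, which plays the role of the pendant vertex. -/
def copyEmb (b c : Bool) : Option (GV n) → GV (n + 1)
  | none => mid b
  | some x => child b c x

lemma copyEmb_injective (b c : Bool) : Function.Injective (copyEmb (n := n) b c) := by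
  rintro (_ | x) (_ | y) h <;> simp_all [copyEmb]

lemma Gtree_adj_copyEmb {b c : Bool} {x y : Option (GV n)} :
    (Gtree (n + 1)).Adj (copyEmb b c x) (copyEmb b c y) ↔ (hatGtree n).Adj x y := by
  rcases x with _ | x <;> rcases y with _ | y
  · simp [copyEmb]
  · simp [copyEmb, Gtree_adj_mid_child, hatGtree_adj_none_some]
  · rw [SimpleGraph.adj_comm, (hatGtree n).adj_comm]
    simp [copyEmb, Gtree_adj_mid_child, hatGtree_adj_none_some]
  · simp [copyEmb, Gtree_adj_child_child, hatGtree_adj_some_some]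

end GV

instance : DecidableRel subK4Rel := fun i j ↦ by
  unfold subK4Rel
  infer_instance

instance : DecidableRel subK4.Adj := fun i j ↦
  decidable_of_iff (i ≠ j ∧ (subK4Rel i j ∨ subK4Rel j i)) (SimpleGraph.fromRel_adj _ _ _).symm

lemma isFort_coe_iff {V : Type*} {G : SimpleGraph V} {R : Finset V} :
    IsFort G R ↔
      R.Nonempty ∧ ∀ v u, v ∉ R → u ∈ R → G.Adj v u → ∃ w ∈ R, w ≠ u ∧ G.Adj v w := by
  simp [IsFort]

lemma two_le_card_of_meets_subK4_forts (Q : Finset (Fin 5))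
    (hQ : ∀ R : Finset (Fin 5), IsFort subK4 R → 3 ∉ R → ∃ i ∈ R, i ∈ Q) : 2 ≤ Q.card := by
  have h01 := hQ {0, 1} (isFort_coe_iff.2 (by decide)) (by decide)
  have h24 := hQ {2, 4} (isFort_coe_iff.2 (by decide)) (by decide)
  clear hQ
  revert Q
  decide

lemma three_le_card_of_meets_subK4_forts (Q : Finset (Fin 5))
    (hQ : ∀ R : Finset (Fin 5), IsFort subK4 R → ∃ i ∈ R, i ∈ Q) : 3 ≤ Q.card := by
  have h01 := hQ {0, 1} (isFort_coe_iff.2 (by decide))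
  have h24 := hQ {2, 4} (isFort_coe_iff.2 (by decide))
  have h314 := hQ {3, 1, 4} (isFort_coe_iff.2 (by decide))
  have h312 := hQ {3, 1, 2} (isFort_coe_iff.2 (by decide))
  have h304 := hQ {3, 0, 4} (isFort_coe_iff.2 (by decide))
  have h302 := hQ {3, 0, 2} (isFort_coe_iff.2 (by decide))
  clear hQ
  revert Q
  decide

/-- An induced copy of `Ĝ_{n+1}` in `F` whose vertices other than the pendant one have no
neighbours outside the copy. -/
structure HatCopy (n : ℕ) {W : Type*} (F : SimpleGraph W) where
  toFun : Option (GV n) → W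
  injective : Function.Injective toFun
  adj_iff : ∀ x y, F.Adj (toFun x) (toFun y) ↔ (hatGtree n).Adj x y
  not_adj_of_notMem_range :
    ∀ (a : GV n) (w : W), w ∉ Set.range toFun → ¬ F.Adj (toFun (some a)) w

namespace HatCopy

variable {n : ℕ} {W : Type*} {F : SimpleGraph W} {P : Set W}

instance : CoeFun (HatCopy n F) fun _ ↦ Option (GV n) → W := ⟨toFun⟩

def pendantMove (e : HatCopy n F) : W × W := (e none, e (some (rootV n)))

noncomputable def blackCount (e : HatCopy n F) (P : Set W) : ℕ := {a | e (some a) ∈ P}.ncard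

lemma mem_range_of_adj (e : HatCopy n F) {a : GV n} {w : W} (h : F.Adj (e (some a)) w) :
    w ∈ Set.range e :=
  not_not.1 fun hw ↦ e.not_adj_of_notMem_range a w hw h

lemma adj_some_some (e : HatCopy n F) {x y : GV n} :
    F.Adj (e (some x)) (e (some y)) ↔ (Gtree n).Adj x y :=
  (e.adj_iff _ _).trans hatGtree_adj_some_some

lemma exists_mem_of_isFort (e : HatCopy n F) (hP : IsZeroForcingSet F P) {R : Set (GV n)}
    (hR : IsFort (Gtree n) R)
    (hroot : rootV n ∈ R → IsZeroForcingSetAvoiding F {e.pendantMove} P) :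
    ∃ g ∈ R, e (some g) ∈ P := by
  classical
  have hPB : IsZeroForcingSetAvoiding F (if rootV n ∈ R then {e.pendantMove} else ∅) P := by
    split_ifs with h
    exacts [hroot h, hP.avoiding_empty]
  obtain ⟨_, ⟨g, hg, rfl⟩, hgP⟩ := hPB.inter_nonempty (hR.1.image (e ∘ some)) <| by
    rintro v _ hv ⟨g, hg, rfl⟩ hvg hmove
    obtain ⟨x, rfl⟩ := e.mem_range_of_adj hvg.symm
    cases x with
    | none =>
      obtain rfl := hatGtree_adj_none_some.1 ((e.adj_iff none (some g)).1 hvg)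
      exact (hmove (by simp [hg, pendantMove])).elim
    | some h =>
      obtain ⟨w, hw, hwg, hhw⟩ :=
        hR.2 (fun hh ↦ hv ⟨h, hh, rfl⟩) hg (e.adj_some_some.1 hvg)
      exact ⟨e (some w), ⟨w, hw, rfl⟩, fun he ↦ hwg (by simpa using e.injective he),
        e.adj_some_some.2 hhw⟩
  exact ⟨g, hg, hgP⟩

lemma blackCount_zero_bounds (e : HatCopy 0 F) (hP : IsZeroForcingSet F P) :
    tseq 0 ≤ e.blackCount P ∧
      (IsZeroForcingSetAvoiding F {e.pendantMove} P → tseq 0 + 1 ≤ e.blackCount P) := by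
  classical
  set Q := Finset.univ.filter fun i ↦ e (some (.base i)) ∈ P
  have hcount : e.blackCount P = Q.card := by
    rw [blackCount, ← Set.ncard_preimage_of_injective_subset_range GV.zeroEquiv.injective
      (by simp [GV.zeroEquiv.surjective.range_eq]), ← Set.ncard_coe_finset]
    congr 1
    ext i
    simp [Q, GV.zeroEquiv]
  have hmeets : ∀ R : Finset (Fin 5), IsFort subK4 R →
      (3 ∈ R → IsZeroForcingSetAvoiding F {e.pendantMove} P) → ∃ i ∈ R, i ∈ Q := by
    intro R hR hroot
    obtain ⟨_, ⟨i, hi, rfl⟩, hiP⟩ := e.exists_mem_of_isFort hP (hR.image GV.zeroIso) <| by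
      rintro ⟨i, hi, hi3⟩
      obtain rfl : i = 3 := by simpa [GV.zeroIso, GV.zeroEquiv, rootV] using hi3
      exact hroot hi
    exact ⟨i, hi, by simpa [Q, GV.zeroIso, GV.zeroEquiv] using hiP⟩
  rw [hcount]
  exact ⟨two_le_card_of_meets_subK4_forts Q fun R hR h3 ↦ hmeets R hR (absurd · h3),
    fun hroot ↦ three_le_card_of_meets_subK4_forts Q fun R hR ↦ hmeets R hR fun _ ↦ hroot⟩

def copy (e : HatCopy (n + 1) F) (b c : Bool) : HatCopy n F where
  toFun x := e (some (GV.copyEmb b c x))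
  injective := e.injective.comp ((Option.some_injective _).comp (GV.copyEmb_injective b c))
  adj_iff x y := e.adj_some_some.trans GV.Gtree_adj_copyEmb
  not_adj_of_notMem_range a w hw hadj := by
    obtain ⟨x, rfl⟩ := e.mem_range_of_adj hadj
    rcases x with _ | v
    · exact absurd (hatGtree_adj_none_some.1 ((e.adj_iff _ _).1 hadj.symm))
        (by simp [GV.copyEmb, rootV])
    · rcases Gtree_adj_child_iff.1 (e.adj_some_some.1 hadj) with ⟨y, rfl, -⟩ | ⟨rfl, -⟩
      · exact hw ⟨some y, rfl⟩
      · exact hw ⟨none, rfl⟩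

lemma copy_pendantMove (e : HatCopy (n + 1) F) (b c : Bool) :
    (e.copy b c).pendantMove = (e (some (.mid b)), e (some (.child b c (rootV n)))) := rfl

lemma avoiding_copy_or (e : HatCopy (n + 1) F) (hP : IsZeroForcingSet F P) (b : Bool) :
    IsZeroForcingSetAvoiding F {(e.copy b true).pendantMove} P ∨
      IsZeroForcingSetAvoiding F {(e.copy b false).pendantMove} P := by
  simp only [copy_pendantMove]
  exact hP.avoiding_or (e.adj_some_some.2 (Gtree_adj_mid_child.2 ⟨rfl, rfl⟩))
    (e.adj_some_some.2 (Gtree_adj_mid_child.2 ⟨rfl, rfl⟩)) (by simp [e.injective.eq_iff])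

/-- If the pendant vertex does not force the root, some `mid b` forces it once both copy roots
below `mid b` are black; so `mid b` forces neither of them. -/
lemma exists_side_avoiding (e : HatCopy (n + 1) F) (hP : IsZeroForcingSet F P)
    (havoid : IsZeroForcingSetAvoiding F {e.pendantMove} P) (hroot : e (some .root) ∉ P) :
    ∃ b, ∀ c, IsZeroForcingSetAvoiding F {(e.copy b c).pendantMove} P := by
  by_contra! h
  choose c hc using h
  set B : Set (W × W) :=
    {(e.copy true (c true)).pendantMove, (e.copy false (c false)).pendantMove, e.pendantMove}
  have hmid_root (b : Bool) : F.Adj (e (some (.mid b))) (e (some .root)) :=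
    e.adj_some_some.2 Gtree_adj_root_mid.symm
  have hroot_ne (b : Bool) : e (some .root) ≠ e (some (.child b (c b) (rootV n))) := by
    simp [e.injective.eq_iff]
  have hrootC : RestrictedClosure F B P (e (some .root)) := by
    by_contra hR
    refine hR ((havoid _).mem_of_isForcingClosed (fun w ↦ .init w) ?_)
    exact (isForcingClosed_restrictedClosure.of_subset_insert subset_rfl
      (.inr ⟨_, hmid_root true, hroot_ne true, hR⟩)).of_subset_insert subset_rfl
      (.inr ⟨_, hmid_root false, hroot_ne false, hR⟩)
  obtain ⟨v, hvR, hvB, -, hw⟩ := hrootC.exists_force hroot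
  obtain ⟨_ | v, rfl⟩ := e.mem_range_of_adj hvR.symm
  · exact hvB (by simp [B, pendantMove, rootV])
  obtain ⟨b, rfl⟩ := Gtree_adj_root_iff.1 (e.adj_some_some.1 hvR)
  have hmove : (e (some (.mid b)), e (some (.child b (c b) (rootV n)))) ∈ B := by
    cases b
    exacts [.inr (.inl rfl), .inl rfl]
  exact hc b (hP.avoiding_singleton hmove
    (hw _ (e.adj_some_some.2 (Gtree_adj_mid_child.2 ⟨rfl, rfl⟩)) (hroot_ne b).symm))

open Classical in
lemma blackCount_succ (e : HatCopy (n + 1) F) (P : Set W) :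
    e.blackCount P = (if e (some .root) ∈ P then 1 else 0) +
      (if e (some (.mid true)) ∈ P then 1 else 0) + (if e (some (.mid false)) ∈ P then 1 else 0) +
      ∑ b, ∑ c, (e.copy b c).blackCount P :=
  GV.ncard_setOf_succ _

theorem tseq_le_blackCount {n : ℕ} (e : HatCopy n F) (hP : IsZeroForcingSet F P) :
    tseq n ≤ e.blackCount P ∧
      (IsZeroForcingSetAvoiding F {e.pendantMove} P → tseq n + 1 ≤ e.blackCount P) := by
  induction n with
  | zero => exact e.blackCount_zero_bounds hP
  | succ n ih =>
    have hcopy (b c : Bool) := ih (e.copy b c)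
    have hside (b : Bool) :
        2 * tseq n + 1 ≤ (e.copy b true).blackCount P + (e.copy b false).blackCount P := by
      rcases e.avoiding_copy_or hP b with h | h
      · linarith [(hcopy b true).2 h, (hcopy b false).1]
      · linarith [(hcopy b true).1, (hcopy b false).2 h]
    simp only [tseq, blackCount_succ, Fintype.sum_bool]
    have := hside true
    have := hside false
    refine ⟨by omega, fun havoid ↦ ?_⟩
    by_cases hroot : e (some .root) ∈ P
    · simp only [if_pos hroot]
      omega
    · obtain ⟨b, hb⟩ := e.exists_side_avoiding hP havoid hroot
      have := (hcopy b true).2 (hb true)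
      have := (hcopy b false).2 (hb false)
      cases b <;> omega

end HatCopy

/-- Lemma 1(i): if `F` contains `Ĝ_{n+1}` as an induced subgraph (via the injection
`f`) with no edge between `V(G_{n+1})` and the vertices of `F` outside the copy of
`Ĝ_{n+1}`, then every zero forcing set `P` of `F` satisfies
`|V(G_{n+1}) ∩ P| ≥ t_{n+1}`. -/
theorem tree_lower_bound_i (n : ℕ) {W : Type*} (F : SimpleGraph W)
    (f : Option (GV n) → W) (hinj : Function.Injective f)
    (hind : ∀ x y, F.Adj (f x) (f y) ↔ (hatGtree n).Adj x y)
    (hsep : ∀ (a : GV n) (w : W), w ∉ Set.range f → ¬ F.Adj (f (some a)) w)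
    (P : Set W) (hP : IsZeroForcingSet F P) :
    tseq n ≤ ((Set.range fun a : GV n => f (some a)) ∩ P).ncard := by
  let e : HatCopy n F := ⟨f, hinj, hind, hsep⟩
  have hcount : ((Set.range fun a : GV n => f (some a)) ∩ P).ncard = e.blackCount P := by
    rw [← Set.image_preimage_eq_range_inter]
    exact Set.ncard_image_of_injective _ (hinj.comp (Option.some_injective _))
  exact hcount ▸ (e.tseq_le_blackCount hP).1
end

section
/- With G_n, Ĝ_n, r_n, and t_n as in the binary-tree construction: for every graph F containing Ĝ_n as an induced subgraph with no edges between V(G_n) and V(F) \ V(G_n), and every zero forcing set P of F with |V(G_n) ∩ P| = t_n, the root r_n is not in P and, moreover, r_n is never forced by the zero forcing process restricted to V(G_n) ∩ P within the induced subgraph G_n. -/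
section Part1

/-! ### Instances for `GV` -/

def gvEquiv0 : GV 0 ≃ Fin 5 where
  toFun := fun | .base i => i
  invFun := .base
  left_inv := fun | .base _ => rfl
  right_inv := fun _ => rfl

def gvEquivS (n : ℕ) : GV (n + 1) ≃ (Unit ⊕ Bool ⊕ Bool × Bool × GV n) where
  toFun := fun
    | .root => .inl ()
    | .mid b => .inr (.inl b)
    | .child b c x => .inr (.inr (b, c, x))
  invFun := fun
    | .inl _ => .root
    | .inr (.inl b) => .mid b
    | .inr (.inr (b, c, x)) => .child b c x
  left_inv := fun
    | .root => rfl
    | .mid _ => rfl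
    | .child _ _ _ => rfl
  right_inv := fun
    | .inl _ => rfl
    | .inr (.inl _) => rfl
    | .inr (.inr (_, _, _)) => rfl

instance gvDecEq : ∀ n, DecidableEq (GV n)
  | 0 => gvEquiv0.decidableEq
  | n + 1 => have := gvDecEq n; (gvEquivS n).decidableEq

instance gvFintype : ∀ n, Fintype (GV n)
  | 0 => Fintype.ofEquiv _ gvEquiv0.symm
  | n + 1 => have := gvFintype n; Fintype.ofEquiv _ (gvEquivS n).symm

instance subK4RelDec : ∀ x y, Decidable (subK4Rel x y) := fun x y =>
  inferInstanceAs (Decidable (_ ∈ _))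

instance gAdjDec : ∀ n, ∀ x y : GV n, Decidable (@gAdj n x y)
  | 0, .base i, .base j => inferInstanceAs (Decidable (subK4Rel i j))
  | _ + 1, .root, .mid _ => .isTrue trivial
  | n + 1, .mid b, .child b' _ x =>
      inferInstanceAs (Decidable (b = b' ∧ x = rootV n))
  | n + 1, .child b c x, .child b' c' y =>
      have := gAdjDec n x y
      inferInstanceAs (Decidable (b = b' ∧ c = c' ∧ gAdj x y))
  | _ + 1, .root, .root => .isFalse id
  | _ + 1, .root, .child _ _ _ => .isFalse id
  | _ + 1, .mid _, .root => .isFalse id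
  | _ + 1, .mid _, .mid _ => .isFalse id
  | _ + 1, .child _ _ _, .root => .isFalse id
  | _ + 1, .child _ _ _, .mid _ => .isFalse id

instance gtreeAdjDec (n : ℕ) : DecidableRel (Gtree n).Adj := fun x y =>
  inferInstanceAs (Decidable (x ≠ y ∧ (gAdj x y ∨ gAdj y x)))

end Part1
section Part2

variable {V : Type*} {G : SimpleGraph V} {S T : Set V}

/-- Zero forcing closure with an explicit bound on the derivation height. -/
inductive ZFh (G : SimpleGraph V) (S : Set V) : ℕ → V → Prop
  | init (k : ℕ) (v : V) : v ∈ S → ZFh G S k v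
  | force (k : ℕ) (u v : V) : G.Adj v u → ZFh G S k v →
      (∀ w, G.Adj v w → w ≠ u → ZFh G S k w) → ZFh G S (k + 1) u

theorem ZFh.mono {k l : ℕ} {v : V} (h : ZFh G S k v) (hkl : k ≤ l) : ZFh G S l v := by
  induction h generalizing l with
  | init k v hv => exact .init l v hv
  | force k u v hadj hv hw ihv ihw =>
    obtain ⟨m, rfl⟩ : ∃ m, l = m + 1 := ⟨l - 1, by omega⟩
    exact .force m u v hadj (ihv (by omega)) fun w h1 h2 => ihw w h1 h2 (by omega)

theorem ZFh.toClosure {k : ℕ} {v : V} (h : ZFh G S k v) : ZFClosure G S v := by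
  induction h with
  | init k v hv => exact .init v hv
  | force k u v hadj hv hw ihv ihw => exact .force u v hadj ihv ihw

theorem ZFClosure.toZFh [Finite V] {v : V} (h : ZFClosure G S v) : ∃ k, ZFh G S k v := by
  have := Fintype.ofFinite V
  induction h with
  | init v hv => exact ⟨0, .init 0 v hv⟩
  | force u v hadj hv hw ihv ihw =>
    classical
    choose g hg using fun (w : V) (h1 : G.Adj v w) (h2 : w ≠ u) => ihw w h1 h2
    obtain ⟨kv, hkv⟩ := ihv
    set N := kv ⊔ Finset.univ.sup (fun w : V =>
      if h' : G.Adj v w ∧ w ≠ u then g w h'.1 h'.2 else 0) with hN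
    refine ⟨N + 1, .force N u v hadj (hkv.mono le_sup_left) fun w h1 h2 => ?_⟩
    refine (hg w h1 h2).mono (le_trans ?_ le_sup_right)
    have := Finset.le_sup (f := fun w : V =>
      if h' : G.Adj v w ∧ w ≠ u then g w h'.1 h'.2 else 0) (Finset.mem_univ w)
    simpa [h1, h2] using this

theorem ZFClosure.mono_set (hST : S ⊆ T) {v : V} (h : ZFClosure G S v) :
    ZFClosure G T v := by
  induction h with
  | init v hv => exact .init v (hST hv)
  | force u v hadj hv hw ihv ihw => exact .force u v hadj ihv ihw

end Part2
section Part4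

variable {n : ℕ}

theorem gtree_adj (x y : GV n) : (Gtree n).Adj x y ↔ x ≠ y ∧ (gAdj x y ∨ gAdj y x) :=
  SimpleGraph.fromRel_adj _ _ _

@[simp] theorem not_adj_root_root : ¬ (Gtree (n+1)).Adj .root .root :=
  fun h => h.ne rfl

@[simp] theorem adj_root_mid (b : Bool) : (Gtree (n+1)).Adj .root (.mid b) := by
  rw [gtree_adj]
  exact ⟨by simp, Or.inl trivial⟩

@[simp] theorem not_adj_root_child (b c : Bool) (x : GV n) :
    ¬ (Gtree (n+1)).Adj .root (.child b c x) := by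
  rw [gtree_adj]
  rintro ⟨-, h | h⟩ <;> exact h

@[simp] theorem not_adj_mid_mid (b b' : Bool) : ¬ (Gtree (n+1)).Adj (.mid b) (.mid b') := by
  rw [gtree_adj]
  rintro ⟨-, h | h⟩ <;> exact h

theorem adj_mid_child (b b' c : Bool) (x : GV n) :
    (Gtree (n+1)).Adj (.mid b) (.child b' c x) ↔ b = b' ∧ x = rootV n := by
  rw [gtree_adj]
  constructor
  · rintro ⟨-, h | h⟩
    · exact h
    · exact absurd h id
  · rintro ⟨rfl, rfl⟩
    exact ⟨by simp, Or.inl ⟨rfl, rfl⟩⟩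

theorem adj_child_child (b b' c c' : Bool) (x y : GV n) :
    (Gtree (n+1)).Adj (.child b c x) (.child b' c' y) ↔
      b = b' ∧ c = c' ∧ (Gtree n).Adj x y := by
  rw [gtree_adj, gtree_adj]
  constructor
  · rintro ⟨hne, ⟨rfl, rfl, h⟩ | ⟨h1, h2, h⟩⟩
    · exact ⟨rfl, rfl, fun hxy => hne (by rw [hxy]), Or.inl h⟩
    · subst h1; subst h2
      exact ⟨rfl, rfl, fun hxy => hne (by rw [hxy]), Or.inr h⟩
  · rintro ⟨rfl, rfl, hne, h | h⟩
    · exact ⟨by simp [hne], Or.inl ⟨rfl, rfl, h⟩⟩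
    · exact ⟨by simp [hne], Or.inr ⟨rfl, rfl, h⟩⟩

theorem adj_to_root (v : GV (n+1)) (h : (Gtree (n+1)).Adj v .root) : ∃ b, v = .mid b := by
  match v with
  | .root => exact absurd h not_adj_root_root
  | .mid b => exact ⟨b, rfl⟩
  | .child b c x => exact absurd h.symm (not_adj_root_child b c x)

theorem adj_mid_to (b : Bool) (w : GV (n+1)) (h : (Gtree (n+1)).Adj (.mid b) w) :
    w = .root ∨ ∃ c, w = .child b c (rootV n) := by
  match w with
  | .root => exact Or.inl rfl
  | .mid b' => exact absurd h (not_adj_mid_mid b b')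
  | .child b' c x =>
    obtain ⟨rfl, rfl⟩ := (adj_mid_child b b' c x).1 h
    exact Or.inr ⟨c, rfl⟩

theorem adj_child_to (b c : Bool) (x : GV n) (w : GV (n+1))
    (h : (Gtree (n+1)).Adj (.child b c x) w) :
    (x = rootV n ∧ w = .mid b) ∨ ∃ y, w = .child b c y ∧ (Gtree n).Adj x y := by
  match w with
  | .root => exact absurd h.symm (not_adj_root_child b c x)
  | .mid b' =>
    obtain ⟨rfl, rfl⟩ := (adj_mid_child b' b c x).1 h.symm
    exact Or.inl ⟨rfl, rfl⟩
  | .child b' c' y =>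
    obtain ⟨rfl, rfl, h'⟩ := (adj_child_child b b' c c' x y).1 h
    exact Or.inr ⟨y, rfl, h'⟩

end Part4
section Part5

variable {n : ℕ}

/-- Restriction of the zero forcing process to a child copy, with the child's
root added to the initial set. -/
theorem closure_child_restrict (b c : Bool) (Q : Set (GV (n+1))) :
    ∀ v : GV (n+1), ZFClosure (Gtree (n+1)) Q v → ∀ x : GV n, v = .child b c x →
      ZFClosure (Gtree n) ((GV.child b c ⁻¹' Q) ∪ {rootV n}) x := by
  intro v h
  induction h with
  | init v hv => rintro x rfl; exact .init x (Or.inl hv)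
  | force u v hadj hv hw ihv ihw =>
    rintro x rfl
    rcases adj_child_to b c x v hadj.symm with ⟨hx, rfl⟩ | ⟨y, rfl, hxy⟩
    · exact .init x (Or.inr hx)
    · refine .force x y hxy.symm (ihv y rfl) fun w hw' hne => ?_
      refine ihw (.child b c w) ((adj_child_child b b c c y w).2 ⟨rfl, rfl, hw'⟩)
        (by simp [hne]) w rfl

/-- Restriction of the zero forcing process to a child copy, without external
help, provided small derivations never blacken both the global root and the
sibling's root. -/
theorem zfh_child_restrict (b c : Bool) (Q : Set (GV (n+1))) :
    ∀ k (v : GV (n+1)), ZFh (Gtree (n+1)) Q k v → ∀ x : GV n, v = .child b c x →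
    (∀ j, j < k → ZFh (Gtree (n+1)) Q j .root →
        ZFh (Gtree (n+1)) Q j (.child b (!c) (rootV n)) → False) →
    ZFClosure (Gtree n) (GV.child b c ⁻¹' Q) x := by
  intro k
  induction k using Nat.strong_induction_on with
  | _ k IH =>
    intro v h x hx cond
    cases h with
    | init _ v hv => subst hx; exact .init x hv
    | force m u v hadj hv hw =>
      subst hx
      rcases adj_child_to b c x v hadj.symm with ⟨rfl, rfl⟩ | ⟨y, rfl, hxy⟩
      · -- forced by the middle vertex `mid b`: both the global root and the
        -- sibling root must be black at height `m`.
        have hroot : ZFh (Gtree (n+1)) Q m .root :=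
          hw .root (adj_root_mid b).symm (by simp)
        have hsib : ZFh (Gtree (n+1)) Q m (.child b (!c) (rootV n)) :=
          hw (.child b (!c) (rootV n))
            ((adj_mid_child b b (!c) (rootV n)).2 ⟨rfl, rfl⟩) (by simp)
        exact absurd (cond m (by omega) hroot hsib) id
      · refine .force x y hxy.symm
          (IH m (by omega) _ hv y rfl fun j hj => cond j (by omega)) fun w hw' hne => ?_
        refine IH m (by omega) _
          (hw (.child b c w) ((adj_child_child b b c c y w).2 ⟨rfl, rfl, hw'⟩)
            (by simp [hne])) w rfl fun j hj => cond j (by omega)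

end Part5
section Part6

variable {n : ℕ}

theorem hat_adj_some_some (x y : GV n) :
    (hatGtree n).Adj (some x) (some y) ↔ (Gtree n).Adj x y := by
  show (some x ≠ some y ∧ _) ↔ (x ≠ y ∧ _)
  simp only [ne_eq, Option.some.injEq]
  rfl

theorem hat_adj_none_some (x : GV n) :
    (hatGtree n).Adj none (some x) ↔ x = rootV n := by
  show (none ≠ some x ∧ ((x = rootV n) ∨ False)) ↔ _
  simp

/-- Restriction of the zero forcing process from the ambient graph `F` to the
copy of `G_n`, with the root added to the initial set. -/
theorem closure_F_restrict {W : Type*} (F : SimpleGraph W)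
    (f : Option (GV n) → W) (hinj : Function.Injective f)
    (hind : ∀ x y, F.Adj (f x) (f y) ↔ (hatGtree n).Adj x y)
    (hsep : ∀ (a : GV n) (w : W), w ∉ Set.range f → ¬ F.Adj (f (some a)) w)
    (P : Set W) :
    ∀ w : W, ZFClosure F P w → ∀ x : GV n, w = f (some x) →
      ZFClosure (Gtree n) (((fun a : GV n => f (some a)) ⁻¹' P) ∪ {rootV n}) x := by
  intro w h
  induction h with
  | init w hw => rintro x rfl; exact .init x (Or.inl hw)
  | force u v hadj hv hw ihv ihw =>
    rintro x rfl
    by_cases hvr : v ∈ Set.range f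
    · obtain ⟨o, rfl⟩ := hvr
      match o with
      | none =>
        have := (hind none (some x)).1 hadj
        rw [hat_adj_none_some] at this
        exact .init x (Or.inr this)
      | some y =>
        have hyx : (Gtree n).Adj y x := (hat_adj_some_some y x).1 ((hind _ _).1 hadj)
        refine .force x y hyx (ihv y rfl) fun z hz hne => ?_
        refine ihw (f (some z)) ((hind _ _).2 ((hat_adj_some_some y z).2 hz)) ?_ z rfl
        intro hEq
        exact hne (Option.some.injEq .. ▸ (hinj hEq) ▸ rfl)
    · exact absurd hadj.symm (hsep x v hvr)

end Part6
section Part7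

/-- A set of black vertices from which no further forcing is possible: every
black vertex with a white neighbor has at least two white neighbors. -/
def IsStalled {V : Type*} (G : SimpleGraph V) (g : V → Bool) : Prop :=
  ∀ v, g v = true → ∀ u, G.Adj v u → g u = false →
    ∃ w, G.Adj v w ∧ w ≠ u ∧ g w = false

theorem closure_subset_stalled {V : Type*} {G : SimpleGraph V} {g : V → Bool}
    (hst : IsStalled G g) {S : Set V} (hS : ∀ v ∈ S, g v = true) :
    ∀ x, ZFClosure G S x → g x = true := by
  intro x h
  induction h with
  | init v hv => exact hS v hv
  | force u v hadj hv hw ihv ihw =>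
    by_contra hu
    obtain ⟨w, hw1, hw2, hw3⟩ := hst v ihv u hadj (by simpa using hu)
    rw [ihw w hw1 hw2] at hw3
    exact absurd hw3 (by simp)

/-- A stalled superset of `{rootV 0, x}`. -/
def gfun (x : GV 0) : GV 0 → Bool := fun v =>
  decide (v = rootV 0 ∨ v = x ∨ (x = .base 0 ∧ v = .base 1) ∨ (x = .base 1 ∧ v = .base 0))

theorem gfun_stalled : ∀ x : GV 0, IsStalled (Gtree 0) (gfun x) := by unfold IsStalled; decide

theorem gfun_not_univ : ∀ x : GV 0, ∃ v, gfun x v = false := by decide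

/-- Any two-element subset of the non-root vertices of `subK4` is stalled. -/
def pfun (x y : GV 0) : GV 0 → Bool := fun v => decide (v = x ∨ v = y)

theorem pfun_stalled : ∀ x y : GV 0, x ≠ rootV 0 → y ≠ rootV 0 →
    IsStalled (Gtree 0) (pfun x y) := by unfold IsStalled; decide

theorem keyC0 (S : Set (GV 0)) (hzf : ∀ v, ZFClosure (Gtree 0) (S ∪ {rootV 0}) v) :
    2 ≤ (S \ {rootV 0}).ncard ∧
      (rootV 0 ∉ S → S.ncard = 2 → ¬ ZFClosure (Gtree 0) S (rootV 0)) := by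
  constructor
  · by_contra hlt
    push_neg at hlt
    have hfin : (S \ {rootV 0}).Finite := Set.toFinite _
    have hsub : ∃ x : GV 0, S \ {rootV 0} ⊆ {x} := by
      interval_cases h : (S \ {rootV 0}).ncard
      · rw [Set.ncard_eq_zero hfin] at h
        exact ⟨.base 0, by simp [h]⟩
      · obtain ⟨x, hx⟩ := (Set.ncard_eq_one).1 h
        exact ⟨x, by simp [hx]⟩
    obtain ⟨x, hx⟩ := hsub
    obtain ⟨v, hv⟩ := gfun_not_univ x
    have hSg : ∀ w ∈ S ∪ {rootV 0}, gfun x w = true := by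
      rintro w (hw | hw)
      · rcases eq_or_ne w (rootV 0) with rfl | hne
        · simp [gfun]
        · have : w ∈ ({x} : Set (GV 0)) := hx ⟨hw, hne⟩
          simp only [Set.mem_singleton_iff] at this
          simp [gfun, this]
      · simp only [Set.mem_singleton_iff] at hw
        simp [gfun, hw]
    have := closure_subset_stalled (gfun_stalled x) hSg v (hzf v)
    rw [hv] at this
    exact absurd this (by simp)
  · intro hroot hcard hcl
    obtain ⟨x, y, hxy, hS⟩ := Set.ncard_eq_two.1 hcard
    have hx : x ≠ rootV 0 := fun h => hroot (h ▸ (hS ▸ (by simp : x ∈ ({x, y} : Set _))))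
    have hy : y ≠ rootV 0 := fun h => hroot (h ▸ (hS ▸ (by simp : y ∈ ({x, y} : Set _))))
    have hSg : ∀ w ∈ S, pfun x y w = true := by
      intro w hw
      rw [hS] at hw
      rcases hw with rfl | rfl <;> simp [pfun]
    have := closure_subset_stalled (pfun_stalled x y hx hy) hSg (rootV 0) hcl
    simp only [pfun, decide_eq_true_eq] at this
    rcases this with h | h
    · exact hx h.symm
    · exact hy h.symm

end Part7
section Part8

variable {n : ℕ}

@[simp] theorem child_eq_child {b b' c c' : Bool} {x y : GV n} :
    (GV.child b c x : GV (n+1)) = GV.child b' c' y ↔ b = b' ∧ c = c' ∧ x = y := by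
  constructor
  · intro h
    injection h with h0 h1 h2 h3
    exact ⟨h1, h2, h3⟩
  · rintro ⟨rfl, rfl, rfl⟩; rfl

@[simp] theorem child_ne_root {b c : Bool} {x : GV n} :
    (GV.child b c x : GV (n+1)) ≠ GV.root := fun h => nomatch h

@[simp] theorem root_ne_child {b c : Bool} {x : GV n} :
    (GV.root : GV (n+1)) ≠ GV.child b c x := fun h => nomatch h

@[simp] theorem mid_ne_root {b : Bool} : (GV.mid b : GV (n+1)) ≠ GV.root := fun h => nomatch h

@[simp] theorem root_ne_mid {b : Bool} : (GV.root : GV (n+1)) ≠ GV.mid b := fun h => nomatch h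

@[simp] theorem child_ne_mid {b b' c : Bool} {x : GV n} :
    (GV.child b c x : GV (n+1)) ≠ GV.mid b' := fun h => nomatch h

@[simp] theorem mid_ne_child {b b' c : Bool} {x : GV n} :
    (GV.mid b' : GV (n+1)) ≠ GV.child b c x := fun h => nomatch h

@[simp] theorem mid_eq_mid {b b' : Bool} : (GV.mid b : GV (n+1)) = GV.mid b' ↔ b = b' := by
  constructor
  · intro h; injection h
  · rintro rfl; rfl

theorem child_injective (b c : Bool) : Function.Injective (GV.child b c (n := n)) :=
  fun x y h => (child_eq_child.1 h).2.2

/-- The half of `G_{n+1}` hanging from the middle vertex `mid b`. -/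
def sideSet (n : ℕ) (b : Bool) : Set (GV (n+1)) :=
  Set.range (GV.child b false) ∪ Set.range (GV.child b true) ∪ {GV.mid b}

theorem mem_sideSet {b : Bool} {v : GV (n+1)} :
    v ∈ sideSet n b ↔ (∃ c x, v = GV.child b c x) ∨ v = GV.mid b := by
  simp only [sideSet, Set.mem_union, Set.mem_range, Set.mem_singleton_iff]
  constructor
  · rintro ((⟨x, rfl⟩ | ⟨x, rfl⟩) | h)
    · exact Or.inl ⟨false, x, rfl⟩
    · exact Or.inl ⟨true, x, rfl⟩
    · exact Or.inr h
  · rintro (⟨c, x, rfl⟩ | rfl)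
    · cases c
      · exact Or.inl (Or.inl ⟨x, rfl⟩)
      · exact Or.inl (Or.inr ⟨x, rfl⟩)
    · exact Or.inr rfl

theorem ncard_inter_range_child (S : Set (GV (n+1))) (b c : Bool) :
    (S ∩ Set.range (GV.child b c)).ncard = (GV.child b c ⁻¹' S).ncard := by
  rw [← Set.image_preimage_eq_inter_range,
    Set.ncard_image_of_injective _ (child_injective b c)]

theorem sideSet_ncard (S : Set (GV (n+1))) (b : Bool) :
    (S ∩ sideSet n b).ncard =
      (GV.child b false ⁻¹' S).ncard + (GV.child b true ⁻¹' S).ncard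
        + (S ∩ {GV.mid b}).ncard := by
  have hsplit : S ∩ sideSet n b =
      ((S ∩ Set.range (GV.child b false)) ∪ (S ∩ Set.range (GV.child b true)))
        ∪ (S ∩ {GV.mid b}) := by
    rw [sideSet, Set.inter_union_distrib_left, Set.inter_union_distrib_left]
  have d1 : Disjoint (S ∩ Set.range (GV.child b false)) (S ∩ Set.range (GV.child b true)) := by
    rw [Set.disjoint_left]
    rintro v ⟨-, x, rfl⟩ ⟨-, y, hy⟩
    exact absurd (child_eq_child.1 hy).2.1 (by simp)
  have d2 : Disjoint ((S ∩ Set.range (GV.child b false)) ∪ (S ∩ Set.range (GV.child b true)))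
      (S ∩ {GV.mid b}) := by
    rw [Set.disjoint_left]
    rintro v (⟨-, x, rfl⟩ | ⟨-, x, rfl⟩) ⟨-, h⟩ <;>
      exact child_ne_mid h
  rw [hsplit, Set.ncard_union_eq d2 (Set.toFinite _) (Set.toFinite _),
    Set.ncard_union_eq d1 (Set.toFinite _) (Set.toFinite _),
    ncard_inter_range_child, ncard_inter_range_child]

theorem ncard_diff_root (S : Set (GV (n+1))) :
    (S \ {GV.root}).ncard = (S ∩ sideSet n false).ncard + (S ∩ sideSet n true).ncard := by
  have hsplit : S \ {GV.root} = (S ∩ sideSet n false) ∪ (S ∩ sideSet n true) := by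
    ext v
    simp only [Set.mem_diff, Set.mem_union, Set.mem_inter_iff, Set.mem_singleton_iff,
      mem_sideSet]
    match v with
    | .root => simp
    | .mid b =>
      cases b <;> simp
    | .child b c x =>
      cases b <;> simp
  have hdisj : Disjoint (S ∩ sideSet n false) (S ∩ sideSet n true) := by
    rw [Set.disjoint_left]
    rintro v ⟨-, h1⟩ ⟨-, h2⟩
    rw [mem_sideSet] at h1 h2
    rcases h1 with ⟨c, x, rfl⟩ | rfl
    · rcases h2 with ⟨c', x', h⟩ | h
      · exact absurd (child_eq_child.1 h).1 (by simp)
      · exact child_ne_mid h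
    · rcases h2 with ⟨c', x', h⟩ | h
      · exact mid_ne_child h
      · exact absurd (mid_eq_mid.1 h) (by simp)
  rw [hsplit, Set.ncard_union_eq hdisj (Set.toFinite _) (Set.toFinite _)]

theorem child_preimage_union_root (S : Set (GV (n+1))) (b c : Bool) :
    GV.child b c ⁻¹' (S ∪ {GV.root}) = GV.child b c ⁻¹' S := by
  ext x
  simp only [Set.preimage_union, Set.mem_union, Set.mem_preimage, Set.mem_singleton_iff]
  exact or_iff_left child_ne_root

end Part8
section Part9

@[simp] theorem rootV_succ (n : ℕ) : rootV (n + 1) = GV.root := rfl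

/-- The key induction: if `S` together with the root forces all of `G_n`, then
`S` has at least `t_n` non-root elements; and if it has exactly `t_n` elements,
none of which is the root, then `S` alone never forces the root. -/
theorem keyC : ∀ n (S : Set (GV n)), (∀ v, ZFClosure (Gtree n) (S ∪ {rootV n}) v) →
    tseq n ≤ (S \ {rootV n}).ncard ∧
      (rootV n ∉ S → S.ncard = tseq n → ¬ ZFClosure (Gtree n) S (rootV n)) := by
  intro n
  induction n with
  | zero => exact keyC0
  | succ n IH =>
    intro S hzf
    classical
    have hts : tseq (n + 1) = 4 * tseq n + 2 := rfl
    have hchild : ∀ b c : Bool, ∀ v,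
        ZFClosure (Gtree n) ((GV.child b c ⁻¹' S) ∪ {rootV n}) v := by
      intro b c v
      have := closure_child_restrict b c (S ∪ {GV.root}) _ (hzf (.child b c v)) v rfl
      rwa [child_preimage_union_root] at this
    have hA : ∀ b c : Bool, tseq n ≤ ((GV.child b c ⁻¹' S) \ {rootV n}).ncard :=
      fun b c => (IH _ (hchild b c)).1
    have hAcard : ∀ b c : Bool, tseq n ≤ (GV.child b c ⁻¹' S).ncard :=
      fun b c => le_trans (hA b c) (Set.ncard_le_ncard Set.diff_subset (Set.toFinite _))
    have hroot_in : ∀ b c : Bool, rootV n ∈ GV.child b c ⁻¹' S →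
        tseq n + 1 ≤ (GV.child b c ⁻¹' S).ncard := by
      intro b c hmem
      have h1 := Set.ncard_diff_singleton_add_one hmem (Set.toFinite _)
      have h2 := hA b c
      omega
    -- Step 1: each side carries at least `2 t_n + 1` vertices of `S`.
    have hside : ∀ b : Bool, 2 * tseq n + 1 ≤ (S ∩ sideSet n b).ncard := by
      intro b
      by_contra hlt
      push_neg at hlt
      rw [sideSet_ncard] at hlt
      have hf := hAcard b false
      have ht := hAcard b true
      have htight : ∀ c : Bool, (GV.child b c ⁻¹' S).ncard = tseq n ∧
          rootV n ∉ GV.child b c ⁻¹' S := by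
        intro c
        cases c
        · exact ⟨by omega, fun hm => by have := hroot_in b false hm; omega⟩
        · exact ⟨by omega, fun hm => by have := hroot_in b true hm; omega⟩
      have hex : ∃ k, ∃ c : Bool,
          ZFh (Gtree (n+1)) (S ∪ {GV.root}) k (GV.child b c (rootV n)) := by
        obtain ⟨k, hk⟩ := (hzf (GV.child b false (rootV n))).toZFh
        exact ⟨k, false, hk⟩
      obtain ⟨c0, hc0⟩ := Nat.find_spec hex
      have hres := zfh_child_restrict b c0 (S ∪ {GV.root}) (Nat.find hex) _ hc0 (rootV n) rfl
        (fun j hj _ hs => Nat.find_min hex hj ⟨!c0, hs⟩)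
      rw [child_preimage_union_root] at hres
      exact (IH _ (hchild b c0)).2 (htight c0).2 (htight c0).1 hres
    -- Part (a)
    have parta : tseq (n+1) ≤ (S \ {rootV (n+1)}).ncard := by
      rw [rootV_succ, ncard_diff_root, hts]
      have h1 := hside false
      have h2 := hside true
      omega
    refine ⟨parta, ?_⟩
    -- Part (b)
    intro hrS hcard hcl
    have hrS' : GV.root ∉ S := hrS
    have hsum : (S ∩ sideSet n false).ncard + (S ∩ sideSet n true).ncard
        = 4 * tseq n + 2 := by
      rw [← ncard_diff_root, Set.diff_singleton_eq_self hrS', hcard, hts]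
    have hex2 : ∃ k, ZFh (Gtree (n+1)) S k GV.root := hcl.toZFh
    have hspec := Nat.find_spec hex2
    generalize hEq : Nat.find hex2 = h0 at hspec
    cases hspec with
    | init _ _ hmem => exact hrS' hmem
    | force m u v hadj hv hw =>
      obtain ⟨b, rfl⟩ := adj_to_root v hadj
      have hsib : ∀ c : Bool, ZFh (Gtree (n+1)) S m (GV.child b c (rootV n)) :=
        fun c => hw _ ((adj_mid_child b b c (rootV n)).2 ⟨rfl, rfl⟩) child_ne_root
      have hres : ∀ c : Bool, ZFClosure (Gtree n) (GV.child b c ⁻¹' S) (rootV n) := by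
        intro c
        exact zfh_child_restrict b c S m _ (hsib c) (rootV n) rfl
          (fun j hj hr _ => Nat.find_min hex2 (by omega) hr)
      have hbc : ∀ c : Bool, tseq n + 1 ≤ (GV.child b c ⁻¹' S).ncard := by
        intro c
        by_contra hlt
        push_neg at hlt
        have h1 := hAcard b c
        have heq : (GV.child b c ⁻¹' S).ncard = tseq n := by omega
        have hnr : rootV n ∉ GV.child b c ⁻¹' S := fun hm => by
          have := hroot_in b c hm; omega
        exact (IH _ (hchild b c)).2 hnr heq (hres c)
      have hsb := sideSet_ncard S b
      have h1 := hbc false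
      have h2 := hbc true
      have hob := hside (!b)
      have hsb2 := hside b
      cases b
      · simp only [Bool.not_false] at hob
        omega
      · simp only [Bool.not_true] at hob
        omega

end Part9


/-- Lemma 1(ii): if `F` contains `Ĝ_{n+1}` as an induced subgraph (via the injection
`f`) with no edge between `V(G_{n+1})` and the vertices of `F` outside the copy of
`Ĝ_{n+1}`, and `P` is a zero forcing set of `F` with `|V(G_{n+1}) ∩ P| = t_{n+1}`,
then the root `r_{n+1}` is not in `P` and `V(G_{n+1}) ∩ P` does not force `r_{n+1}`
within `G_{n+1}`. -/
theorem tree_lower_bound_ii (n : ℕ) {W : Type*} (F : SimpleGraph W)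
    (f : Option (GV n) → W) (hinj : Function.Injective f)
    (hind : ∀ x y, F.Adj (f x) (f y) ↔ (hatGtree n).Adj x y)
    (hsep : ∀ (a : GV n) (w : W), w ∉ Set.range f → ¬ F.Adj (f (some a)) w)
    (P : Set W) (hP : IsZeroForcingSet F P)
    (hcard : ((Set.range fun a : GV n => f (some a)) ∩ P).ncard = tseq n) :
    f (some (rootV n)) ∉ P ∧
      ¬ ZFClosure (Gtree n) ((fun a : GV n => f (some a)) ⁻¹' P) (rootV n) := by 
  set S : Set (GV n) := (fun a : GV n => f (some a)) ⁻¹' P with hS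
  have hzf : ∀ v, ZFClosure (Gtree n) (S ∪ {rootV n}) v := fun v =>
    closure_F_restrict F f hinj hind hsep P _ (hP (f (some v))) v rfl
  have hinj' : Function.Injective (fun a : GV n => f (some a)) :=
    fun a b h => Option.some_injective _ (hinj h)
  have hScard : S.ncard = tseq n := by
    rw [← hcard, Set.inter_comm, ← Set.image_preimage_eq_inter_range, ← hS,
      Set.ncard_image_of_injective _ hinj']
  obtain ⟨ha, hb⟩ := keyC n S hzf
  have hroot : rootV n ∉ S := by
    intro hmem
    have h1 := Set.ncard_diff_singleton_add_one hmem (Set.toFinite _)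
    have h2 : 1 ≤ tseq n := by cases n <;> simp [tseq]
    omega
  exact ⟨hroot, hb hroot hScard⟩
end

section
/- Let n be divisible by 6, let Ĉ_n be the graph obtained from the cycle C_n by attaching a distinct pendant leaf to every cycle vertex, and let G_n be obtained from Ĉ_n by replacing every leaf with a subdivided K_4 (attached via the subdivision vertex). Then Z(G_n) ≥ (5/12)·|V(G_n)|. -/
/-- One-sided edge relation of the graph obtained from the cycle `C_n` by attaching
a pendant leaf to every cycle vertex and then replacing every leaf with a subdivided
`K₄` (attached via its subdivision vertex `3`). -/
def cycleConstrRel (n : ℕ) : Fin n ⊕ Fin n × Fin 5 → Fin n ⊕ Fin n × Fin 5 → Prop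
  | .inl i, .inl j => (j : ℕ) = ((i : ℕ) + 1) % n
  | .inl i, .inr (j, k) => i = j ∧ k = 3
  | .inr (i, k), .inr (j, l) => i = j ∧ subK4Rel k l
  | _, _ => False

/-- The cycle `C_n` with a subdivided `K₄` attached to every cycle vertex. -/
def cycleConstr (n : ℕ) : SimpleGraph (Fin n ⊕ Fin n × Fin 5) :=
  SimpleGraph.fromRel (cycleConstrRel n)

section Machinery

variable {V : Type*} (G : SimpleGraph V) (S : Set V)

def zfIter : ℕ → Set V
  | 0 => S
  | (k+1) => zfIter k ∪ {u | ∃ v, G.Adj v u ∧ v ∈ zfIter k ∧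
      ∀ w, G.Adj v w → w ≠ u → w ∈ zfIter k}

lemma zfIter_mono : Monotone (zfIter G S) :=
  monotone_nat_of_le_succ (fun _ => Set.subset_union_left)

variable {G S}

lemma exists_uniform {α : Type*} {T : Set α} (hT : T.Finite) {f : ℕ → Set α} (hf : Monotone f)
    (h : ∀ a ∈ T, ∃ k, a ∈ f k) : ∃ k, ∀ a ∈ T, a ∈ f k := by
  classical
  choose g hg using h
  refine ⟨hT.toFinset.sup (fun a => if h : a ∈ T then g a h else 0), fun a ha => ?_⟩
  have hle : g a ha ≤ hT.toFinset.sup (fun a => if h : a ∈ T then g a h else 0) := by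
    have := Finset.le_sup (s := hT.toFinset)
      (f := fun a => if h : a ∈ T then g a h else 0) (hT.mem_toFinset.mpr ha)
    simpa [ha] using this
  exact hf hle (hg a ha)

lemma closure_exists_iter [Finite V] (v : V) (h : ZFClosure G S v) :
    ∃ k, v ∈ zfIter G S k := by
  induction h with
  | init v hv => exact ⟨0, hv⟩
  | force u v hadj hv hall ihv ihall =>
    obtain ⟨k0, hk0⟩ := ihv
    have hfin : ({w | G.Adj v w ∧ w ≠ u} : Set V).Finite := Set.toFinite _
    obtain ⟨k1, hk1⟩ := exists_uniform hfin (zfIter_mono G S) (fun a ha => ihall a ha.1 ha.2)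
    exact ⟨max k0 k1 + 1, Or.inr ⟨v, hadj, zfIter_mono G S (le_max_left _ _) hk0,
      fun w hw hne => zfIter_mono G S (le_max_right _ _) (hk1 w ⟨hw, hne⟩)⟩⟩

variable (G S) in
noncomputable def zfRank (v : V) : ℕ := sInf {k | v ∈ zfIter G S k}

lemma mem_zfIter_rank {v : V} (hv : ∃ k, v ∈ zfIter G S k) :
    v ∈ zfIter G S (zfRank G S v) := Nat.sInf_mem hv

lemma zfRank_le {v : V} {k : ℕ} (h : v ∈ zfIter G S k) : zfRank G S v ≤ k := Nat.sInf_le h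

lemma zfRank_zero_iff {v : V} (hv : ∃ k, v ∈ zfIter G S k) :
    zfRank G S v = 0 ↔ v ∈ S := by
  constructor
  · intro h
    have := mem_zfIter_rank hv
    rwa [h] at this
  · intro h
    exact Nat.le_zero.1 (zfRank_le (k := 0) h)

lemma exists_forcer {v : V} (hv : ∃ k, v ∈ zfIter G S k) (h0 : zfRank G S v ≠ 0) :
    ∃ w, G.Adj w v ∧ w ∈ zfIter G S (zfRank G S v - 1) ∧
      ∀ u, G.Adj w u → u ≠ v → u ∈ zfIter G S (zfRank G S v - 1) := by
  have hmem := mem_zfIter_rank hv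
  obtain ⟨m, hm⟩ : ∃ m, zfRank G S v = m + 1 := ⟨zfRank G S v - 1, by omega⟩
  rw [hm] at hmem
  have hnot : v ∉ zfIter G S m := fun h => by have := zfRank_le h; omega
  rcases hmem with h | ⟨w, h1, h2, h3⟩
  · exact absurd h hnot
  · refine ⟨w, h1, ?_, ?_⟩
    · rw [hm]; simpa using h2
    · rw [hm]; simpa using h3

lemma forcer_inj_aux {u1 u2 w : V} (h2 : zfRank G S u2 ≠ 0)
    (hle : zfRank G S u1 ≤ zfRank G S u2)
    (ha2 : G.Adj w u2)
    (hs1 : ∀ u, G.Adj w u → u ≠ u1 → u ∈ zfIter G S (zfRank G S u1 - 1))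
    (hne : u1 ≠ u2) : False := by
  have hle2 : zfRank G S u2 ≤ zfRank G S u1 - 1 :=
    zfRank_le (zfIter_mono G S (by omega) (hs1 u2 ha2 hne.symm))
  omega

lemma forcer_inj {u1 u2 w : V} (h1 : zfRank G S u1 ≠ 0) (h2 : zfRank G S u2 ≠ 0)
    (ha1 : G.Adj w u1) (ha2 : G.Adj w u2)
    (hs1 : ∀ u, G.Adj w u → u ≠ u1 → u ∈ zfIter G S (zfRank G S u1 - 1))
    (hs2 : ∀ u, G.Adj w u → u ≠ u2 → u ∈ zfIter G S (zfRank G S u2 - 1)) :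
    u1 = u2 := by
  by_contra hne
  rcases le_total (zfRank G S u1) (zfRank G S u2) with h | h
  · exact forcer_inj_aux h2 h ha2 hs1 hne
  · exact forcer_inj_aux h1 h ha1 hs2 (Ne.symm hne)

lemma fort_inter (hS : IsZeroForcingSet G S) (F : Set V) (hne : F.Nonempty)
    (hF : ∀ v, v ∉ F → ∀ u ∈ F, G.Adj v u → ∃ w ∈ F, w ≠ u ∧ G.Adj v w) :
    ∃ v ∈ F, v ∈ S := by
  by_contra hcon
  push_neg at hcon
  have key : ∀ v, ZFClosure G S v → v ∉ F := by
    intro v h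
    induction h with
    | init v hv => exact fun hvF => hcon v hvF hv
    | force u v hadj hv hall ihv ihall =>
      intro huF
      obtain ⟨w, hwF, hwu, hadj'⟩ := hF v ihv u huF hadj
      exact ihall w hadj' hwu hwF
  obtain ⟨v, hv⟩ := hne
  exact key v (hS v) hv

end Machinery

section Graph

def XX {n : ℕ} (i : Fin n) : Fin n ⊕ Fin n × Fin 5 := Sum.inl i

def BB {n : ℕ} (i : Fin n) (k : Fin 5) : Fin n ⊕ Fin n × Fin 5 := Sum.inr (i, k)

def sub5adj (k l : Fin 5) : Prop := k ≠ l ∧ (subK4Rel k l ∨ subK4Rel l k)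

instance : DecidableEq (Fin 5 × Fin 5) := inferInstance

instance (k l : Fin 5) : Decidable (subK4Rel k l) := by
  unfold subK4Rel; infer_instance

instance (k l : Fin 5) : Decidable (sub5adj k l) := by
  unfold sub5adj; infer_instance

variable {n : ℕ}

lemma val_one_fin [NeZero n] (hn : 6 ≤ n) : ((1 : Fin n) : ℕ) = 1 := by
  rw [Fin.val_one']
  exact Nat.mod_eq_of_lt (by omega)

lemma succ_val [NeZero n] (hn : 6 ≤ n) (i : Fin n) : ((i + 1 : Fin n) : ℕ) = ((i : ℕ) + 1) % n := by
  rw [Fin.add_def, val_one_fin hn]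

lemma cyc_iff [NeZero n] (hn : 6 ≤ n) (i j : Fin n) : ((j : ℕ) = ((i : ℕ) + 1) % n) ↔ j = i + 1 := by
  rw [Fin.ext_iff, succ_val hn]

lemma ne_succ [NeZero n] (hn : 6 ≤ n) (i : Fin n) : i ≠ i + 1 := by
  intro h
  have h2 := congrArg Fin.val h
  rw [succ_val hn] at h2
  have hi := i.isLt
  rcases Nat.lt_or_ge ((i : ℕ) + 1) n with h3 | h3
  · rw [Nat.mod_eq_of_lt h3] at h2; omega
  · have : (i : ℕ) + 1 = n := by omega
    rw [this, Nat.mod_self] at h2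
    omega

lemma ne_pred [NeZero n] (hn : 6 ≤ n) (i : Fin n) : i ≠ i - 1 := by
  have h1 := ne_succ hn (i - 1)
  rw [sub_add_cancel] at h1
  exact fun h => h1 h.symm

lemma adj_x [NeZero n] (hn : 6 ≤ n) (i : Fin n) (u : Fin n ⊕ Fin n × Fin 5) :
    (cycleConstr n).Adj (XX i) u ↔ u = XX (i + 1) ∨ u = XX (i - 1) ∨ u = BB i 3 := by
  rw [cycleConstr, SimpleGraph.fromRel_adj]
  cases u with
  | inl j =>
    simp only [XX, BB, cycleConstrRel, Sum.inl.injEq, ne_eq, reduceCtorEq, or_false]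
    constructor
    · rintro ⟨hne, h | h⟩
      · exact Or.inl ((cyc_iff hn i j).1 h)
      · right
        have h2 : i = j + 1 := (cyc_iff hn j i).1 h
        rw [h2, add_sub_cancel_right]
    · rintro (h | h)
      · subst h
        exact ⟨fun h => ne_succ hn i h, Or.inl ((cyc_iff hn i _).2 rfl)⟩
      · subst h
        refine ⟨fun h => ne_pred hn i h, Or.inr ((cyc_iff hn _ i).2 (sub_add_cancel i 1).symm)⟩
  | inr p =>
    obtain ⟨j, k⟩ := p
    simp only [XX, BB, cycleConstrRel, ne_eq, reduceCtorEq, not_false_iff, true_and,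
      Sum.inr.injEq, Prod.mk.injEq, false_or, or_false]
    exact ⟨fun h => ⟨h.1.symm, h.2⟩, fun h => ⟨h.1.symm, h.2⟩⟩

lemma adj_b [NeZero n] (hn : 6 ≤ n) (i : Fin n) (k : Fin 5) (u : Fin n ⊕ Fin n × Fin 5) :
    (cycleConstr n).Adj (BB i k) u ↔ (k = 3 ∧ u = XX i) ∨ ∃ l, sub5adj k l ∧ u = BB i l := by
  rw [cycleConstr, SimpleGraph.fromRel_adj]
  cases u with
  | inl j =>
    constructor
    · rintro ⟨hne, h | ⟨h1, h2⟩⟩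
      · exact h.elim
      · exact Or.inl ⟨h2, by rw [h1]; rfl⟩
    · rintro (⟨h2, h1⟩ | ⟨l, hs, h⟩)
      · have hj : j = i := Sum.inl.inj h1
        exact ⟨by simp [BB], Or.inr ⟨hj, h2⟩⟩
      · exact absurd h (by simp [BB])
  | inr p =>
    obtain ⟨j, l⟩ := p
    constructor
    · rintro ⟨hne, ⟨h1, h2⟩ | ⟨h1, h2⟩⟩
      · subst h1
        refine Or.inr ⟨l, ⟨fun he => hne (by rw [he]; rfl), Or.inl h2⟩, rfl⟩
      · subst h1
        refine Or.inr ⟨l, ⟨fun he => hne (by rw [he]; rfl), Or.inr h2⟩, rfl⟩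
    · rintro (⟨h2, h1⟩ | ⟨l', ⟨hnel, hrel⟩, h⟩)
      · exact absurd h1 (by simp [XX, BB])
      · simp only [BB, Sum.inr.injEq, Prod.mk.injEq] at h
        obtain ⟨rfl, rfl⟩ := h
        constructor
        · simp only [BB, ne_eq, Sum.inr.injEq, Prod.mk.injEq, not_and]
          exact fun _ he => hnel he
        · rcases hrel with h | h
          · exact Or.inl ⟨rfl, h⟩
          · exact Or.inr ⟨rfl, h⟩

lemma sub5adj_symm {k l : Fin 5} (h : sub5adj k l) : sub5adj l k :=
  ⟨h.1.symm, h.2.symm⟩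

lemma fact1 : ∀ k0 k1 : Fin 5, sub5adj k0 k1 → k1 ≠ 3 →
    ∃ l1 l2, sub5adj k1 l1 ∧ sub5adj k1 l2 ∧ l1 ≠ k0 ∧ l2 ≠ k0 ∧
      l1 ≠ l2 ∧ l1 ≠ k1 ∧ l2 ≠ k1 := by decide

lemma s01 : ∀ l, sub5adj 0 l → sub5adj 1 l := by decide
lemma s10 : ∀ l, sub5adj 1 l → sub5adj 0 l := by decide
lemma s24 : ∀ l, sub5adj 2 l → l ≠ 4 → sub5adj 4 l := by decide
lemma s42 : ∀ l, sub5adj 4 l → l ≠ 2 → sub5adj 2 l := by decide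

lemma BB_ne_BB {i : Fin n} {k k' : Fin 5} (h : k ≠ k') : BB i k ≠ BB i k' := by
  simp [BB, h]

lemma XX_ne_BB {i j : Fin n} {k : Fin 5} : XX i ≠ BB j k := by simp [XX, BB]

lemma adj_BB [NeZero n] (hn : 6 ≤ n) {i : Fin n} {k l : Fin 5} (h : sub5adj k l) :
    (cycleConstr n).Adj (BB i k) (BB i l) :=
  (adj_b hn i k _).2 (Or.inr ⟨l, h, rfl⟩)

lemma adj_XB [NeZero n] (hn : 6 ≤ n) (i : Fin n) :
    (cycleConstr n).Adj (XX i) (BB i 3) :=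
  (adj_x hn i _).2 (Or.inr (Or.inr rfl))

lemma adj_Xsucc [NeZero n] (hn : 6 ≤ n) (i : Fin n) :
    (cycleConstr n).Adj (XX i) (XX (i + 1)) :=
  (adj_x hn i _).2 (Or.inl rfl)

lemma adj_Xpred [NeZero n] (hn : 6 ≤ n) (i : Fin n) :
    (cycleConstr n).Adj (XX i) (XX (i - 1)) :=
  (adj_x hn i _).2 (Or.inr (Or.inl rfl))

variable {S : Set (Fin n ⊕ Fin n × Fin 5)}

lemma fort_pair [NeZero n] (hn : 6 ≤ n) (hS : IsZeroForcingSet (cycleConstr n) S)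
    (i : Fin n) : (BB i 0 ∈ S ∨ BB i 1 ∈ S) ∧ (BB i 2 ∈ S ∨ BB i 4 ∈ S) := by
  constructor
  · have := fort_inter hS {BB i 0, BB i 1} ⟨BB i 0, by simp⟩ ?_
    · obtain ⟨v, hvF, hvS⟩ := this
      rcases hvF with h | h
      · exact Or.inl (h ▸ hvS)
      · exact Or.inr ((Set.mem_singleton_iff.1 h) ▸ hvS)
    · rintro v hv u hu hadj
      have hadj' := hadj.symm
      rcases hu with rfl | hu
      · rw [adj_b hn] at hadj'
        rcases hadj' with ⟨h30, _⟩ | ⟨l, hsl, rfl⟩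
        · exact absurd h30 (by decide)
        · refine ⟨BB i 1, by simp, BB_ne_BB (by decide), ?_⟩
          exact adj_BB hn (sub5adj_symm (s01 l hsl))
      · rw [Set.mem_singleton_iff] at hu; subst hu
        rw [adj_b hn] at hadj'
        rcases hadj' with ⟨h30, _⟩ | ⟨l, hsl, rfl⟩
        · exact absurd h30 (by decide)
        · refine ⟨BB i 0, by simp, BB_ne_BB (by decide), ?_⟩
          exact adj_BB hn (sub5adj_symm (s10 l hsl))
  · have := fort_inter hS {BB i 2, BB i 4} ⟨BB i 2, by simp⟩ ?_
    · obtain ⟨v, hvF, hvS⟩ := this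
      rcases hvF with h | h
      · exact Or.inl (h ▸ hvS)
      · exact Or.inr ((Set.mem_singleton_iff.1 h) ▸ hvS)
    · rintro v hv u hu hadj
      have hadj' := hadj.symm
      rcases hu with rfl | hu
      · rw [adj_b hn] at hadj'
        rcases hadj' with ⟨h30, _⟩ | ⟨l, hsl, rfl⟩
        · exact absurd h30 (by decide)
        · have hl4 : l ≠ 4 := by
            intro h; subst h; exact hv (by simp)
          refine ⟨BB i 4, by simp, BB_ne_BB (by decide), ?_⟩
          exact adj_BB hn (sub5adj_symm (s24 l hsl hl4))
      · rw [Set.mem_singleton_iff] at hu; subst hu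
        rw [adj_b hn] at hadj'
        rcases hadj' with ⟨h30, _⟩ | ⟨l, hsl, rfl⟩
        · exact absurd h30 (by decide)
        · have hl2 : l ≠ 2 := by
            intro h; subst h; exact hv (by simp)
          refine ⟨BB i 2, by simp, BB_ne_BB (by decide), ?_⟩
          exact adj_BB hn (sub5adj_symm (s42 l hsl hl2))

def LightPred (S : Set (Fin n ⊕ Fin n × Fin 5)) (i : Fin n) : Prop :=
  ∀ k1 k2 k3 : Fin 5, k1 ≠ k2 → k1 ≠ k3 → k2 ≠ k3 →
    BB i k1 ∈ S → BB i k2 ∈ S → BB i k3 ∈ S → False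

lemma light_block [NeZero n] (hn : 6 ≤ n) (hS : IsZeroForcingSet (cycleConstr n) S)
    (i : Fin n) (hlight : LightPred S i)
    (hp : BB i 0 ∈ S ∨ BB i 1 ∈ S) (hq : BB i 2 ∈ S ∨ BB i 4 ∈ S) :
    zfRank (cycleConstr n) S (XX i) < zfRank (cycleConstr n) S (BB i 3) ∧
    zfRank (cycleConstr n) S (XX (i + 1)) < zfRank (cycleConstr n) S (BB i 3) ∧
    zfRank (cycleConstr n) S (XX (i - 1)) < zfRank (cycleConstr n) S (BB i 3) := by
  haveI : Finite (Fin n ⊕ Fin n × Fin 5) := inferInstance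
  have hiter : ∀ v, ∃ k, v ∈ zfIter (cycleConstr n) S k :=
    fun v => closure_exists_iter v (hS v)
  set G := cycleConstr n with hGdef
  set R := zfRank G S with hRdef
  have hd3 : BB i 3 ∉ S := by
    intro hd
    rcases hp with hp | hp <;> rcases hq with hq | hq <;>
      exact hlight _ _ _ (by decide) (by decide) (by decide) hp hq hd
  have hs3 : R (BB i 3) ≠ 0 := fun h => hd3 ((zfRank_zero_iff (hiter _)).1 h)
  have hne : (Finset.univ.filter (fun k : Fin 5 => R (BB i k) ≠ 0)).Nonempty :=
    ⟨3, by simp [hs3]⟩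
  obtain ⟨k0, hk0mem, hk0min⟩ := Finset.exists_min_image _ (fun k => R (BB i k)) hne
  simp only [Finset.mem_filter, Finset.mem_univ, true_and] at hk0mem
  have hmin : ∀ k : Fin 5, BB i k ∈ zfIter G S (R (BB i k0) - 1) → BB i k ∈ S := by
    intro k hk
    have h1 : R (BB i k) ≤ R (BB i k0) - 1 := zfRank_le hk
    by_contra hkS
    have h2 : R (BB i k) ≠ 0 := fun h => hkS ((zfRank_zero_iff (hiter _)).1 h)
    have h3 := hk0min k (by simp [h2])
    have h4 : R (BB i k0) ≠ 0 := hk0mem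
    omega
  obtain ⟨v, hadj, hv, hspec⟩ := exists_forcer (hiter (BB i k0)) hk0mem
  have hvadj : G.Adj (BB i k0) v := hadj.symm
  rw [adj_b hn] at hvadj
  rcases hvadj with ⟨hk03, hvx⟩ | ⟨k1, hs01, hvB⟩
  · subst hvx; subst hk03
    have hx : R (XX i) ≤ R (BB i 3) - 1 := zfRank_le hv
    have hx1 : R (XX (i + 1)) ≤ R (BB i 3) - 1 :=
      zfRank_le (hspec _ (adj_Xsucc hn i) XX_ne_BB)
    have hx2 : R (XX (i - 1)) ≤ R (BB i 3) - 1 :=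
      zfRank_le (hspec _ (adj_Xpred hn i) XX_ne_BB)
    exact ⟨by omega, by omega, by omega⟩
  · subst hvB
    have hvS : BB i k1 ∈ S := hmin k1 hv
    have hk13 : k1 ≠ 3 := fun h => hd3 (h ▸ hvS)
    obtain ⟨l1, l2, ha, hb, h1, h2, h3, h4, h5⟩ := fact1 k0 k1 hs01 hk13
    have hl1S : BB i l1 ∈ S :=
      hmin l1 (hspec _ (adj_BB hn ha) (BB_ne_BB h1))
    have hl2S : BB i l2 ∈ S :=
      hmin l2 (hspec _ (adj_BB hn hb) (BB_ne_BB h2))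
    exact (hlight k1 l1 l2 (Ne.symm h4) (Ne.symm h5) h3 hvS hl1S hl2S).elim

lemma light_source [NeZero n] (hn : 6 ≤ n) (hS : IsZeroForcingSet (cycleConstr n) S)
    (i : Fin n) (hlight : LightPred S i)
    (hall : ∀ j, (BB j 0 ∈ S ∨ BB j 1 ∈ S) ∧ (BB j 2 ∈ S ∨ BB j 4 ∈ S))
    (hx : zfRank (cycleConstr n) S (XX i) ≠ 0)
    {v : Fin n ⊕ Fin n × Fin 5} (hadj : (cycleConstr n).Adj v (XX i))
    (hv : v ∈ zfIter (cycleConstr n) S (zfRank (cycleConstr n) S (XX i) - 1))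
    (hspec : ∀ u, (cycleConstr n).Adj v u → u ≠ XX i →
      u ∈ zfIter (cycleConstr n) S (zfRank (cycleConstr n) S (XX i) - 1)) :
    ∃ j, v = XX j ∧ ¬ LightPred S j := by
  have hL := light_block hn hS i hlight (hall i).1 (hall i).2
  have hadj' : (cycleConstr n).Adj (XX i) v := hadj.symm
  rw [adj_x hn] at hadj'
  rcases hadj' with rfl | rfl | rfl
  · refine ⟨i + 1, rfl, ?_⟩
    intro hlight'
    have hLj := light_block hn hS (i + 1) hlight' (hall (i + 1)).1 (hall (i + 1)).2
    have hLj2 := hLj.2.2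
    rw [add_sub_cancel_right] at hLj2
    have hd : zfRank (cycleConstr n) S (BB (i + 1) 3) ≤ zfRank (cycleConstr n) S (XX i) - 1 :=
      zfRank_le (hspec _ (adj_XB hn (i + 1)) (Ne.symm XX_ne_BB))
    omega
  · refine ⟨i - 1, rfl, ?_⟩
    intro hlight'
    have hLj := light_block hn hS (i - 1) hlight' (hall (i - 1)).1 (hall (i - 1)).2
    have hLj2 := hLj.2.1
    rw [sub_add_cancel] at hLj2
    have hd : zfRank (cycleConstr n) S (BB (i - 1) 3) ≤ zfRank (cycleConstr n) S (XX i) - 1 :=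
      zfRank_le (hspec _ (adj_XB hn (i - 1)) (Ne.symm XX_ne_BB))
    omega
  · have hd : zfRank (cycleConstr n) S (BB i 3) ≤ zfRank (cycleConstr n) S (XX i) - 1 :=
      zfRank_le hv
    have hL1 := hL.1
    omega

lemma main_bound [NeZero n] (hn : 6 ≤ n) (hS : IsZeroForcingSet (cycleConstr n) S) :
    5 * n ≤ 2 * S.ncard := by
  classical
  have hiter : ∀ v, ∃ k, v ∈ zfIter (cycleConstr n) S k :=
    fun v => closure_exists_iter v (hS v)
  have hforce := fun (v : Fin n ⊕ Fin n × Fin 5) (h : zfRank (cycleConstr n) S v ≠ 0) =>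
    exists_forcer (hiter v) h
  choose F hF1 hF2 hF3 using hforce
  set T : Finset (Fin n ⊕ Fin n × Fin 5) := S.toFinite.toFinset with hTdef
  have hTmem : ∀ v, v ∈ T ↔ v ∈ S := fun v => Set.Finite.mem_toFinset _
  have hall : ∀ j, (BB j 0 ∈ S ∨ BB j 1 ∈ S) ∧ (BB j 2 ∈ S ∨ BB j 4 ∈ S) :=
    fun j => fort_pair hn hS j
  set m : Fin n → ℕ := fun i => (T.filter (fun v => ∃ k, v = BB i k)).card with hmdef
  set t : ℕ := (T.filter (fun v => ∃ j, v = XX j)).card with htdef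
  -- counting identity
  have hcount : T.card = t + ∑ i, m i := by
    have h2 : ∀ v ∈ T,
        ((if ∃ j, v = XX j then 1 else 0) + ∑ i, if ∃ k, v = BB i k then 1 else 0) = 1 := by
      intro v _
      cases v with
      | inl j =>
        have e1 : (if ∃ j', (Sum.inl j : Fin n ⊕ Fin n × Fin 5) = XX j' then 1 else 0) = 1 :=
          if_pos ⟨j, rfl⟩
        have e2 : ∀ i : Fin n,
            (if ∃ k, (Sum.inl j : Fin n ⊕ Fin n × Fin 5) = BB i k then 1 else 0) = 0 := by
          intro i
          refine if_neg ?_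
          rintro ⟨k, hk⟩
          exact XX_ne_BB hk
        rw [e1, Finset.sum_congr rfl (fun i _ => e2 i), Finset.sum_const_zero]
        norm_num
      | inr p =>
        obtain ⟨j, k⟩ := p
        have e1 : (if ∃ j', (Sum.inr (j, k) : Fin n ⊕ Fin n × Fin 5) = XX j' then 1 else 0) = 0 := by
          refine if_neg ?_
          rintro ⟨j', hj'⟩
          exact XX_ne_BB hj'.symm
        have e2 : ∀ i : Fin n,
            (if ∃ k', (Sum.inr (j, k) : Fin n ⊕ Fin n × Fin 5) = BB i k' then 1 else 0)
              = if i = j then 1 else 0 := by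
          intro i
          by_cases h : i = j
          · subst h; rw [if_pos ⟨k, rfl⟩, if_pos rfl]
          · rw [if_neg, if_neg h]
            rintro ⟨k', hk'⟩
            simp only [BB, Sum.inr.injEq, Prod.mk.injEq] at hk'
            exact h hk'.1.symm
        rw [e1, Finset.sum_congr rfl (fun i _ => e2 i)]
        simp
    calc T.card = ∑ v ∈ T, 1 := by simp
    _ = ∑ v ∈ T, ((if ∃ j, v = XX j then 1 else 0) + ∑ i, if ∃ k, v = BB i k then 1 else 0) :=
        (Finset.sum_congr rfl h2).symm
    _ = t + ∑ i, m i := by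
        rw [Finset.sum_add_distrib, Finset.sum_comm]
        congr 1
        · exact (Finset.card_filter _ _).symm
        · exact Finset.sum_congr rfl (fun i _ => (Finset.card_filter _ _).symm)
  -- each block has at least 2
  have two_le : ∀ (i : Fin n) (a b : Fin 5), a ≠ b → BB i a ∈ S → BB i b ∈ S → 2 ≤ m i := by
    intro i a b hab ha hb
    have hsub : ({BB i a, BB i b} : Finset (Fin n ⊕ Fin n × Fin 5)) ⊆
        T.filter (fun v => ∃ k, v = BB i k) := by
      intro v hv
      rcases Finset.mem_insert.1 hv with rfl | hv
      · exact Finset.mem_filter.2 ⟨(hTmem _).2 ha, a, rfl⟩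
      · rw [Finset.mem_singleton] at hv; subst hv
        exact Finset.mem_filter.2 ⟨(hTmem _).2 hb, b, rfl⟩
    have hc : ({BB i a, BB i b} : Finset (Fin n ⊕ Fin n × Fin 5)).card = 2 :=
      Finset.card_pair (BB_ne_BB hab)
    have hle : ({BB i a, BB i b} : Finset (Fin n ⊕ Fin n × Fin 5)).card ≤ m i :=
      Finset.card_le_card hsub
    omega
  have hm2 : ∀ i, 2 ≤ m i := by
    intro i
    obtain ⟨hp, hq⟩ := hall i
    rcases hp with hp | hp <;> rcases hq with hq | hq <;>
      exact two_le i _ _ (by decide) hp hq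
  -- non-light blocks have at least 3
  have hheavy_m : ∀ i, ¬ LightPred S i → 3 ≤ m i := by
    intro i h
    rw [LightPred] at h
    push_neg at h
    obtain ⟨k1, k2, k3, h12, h13, h23, h1, h2, h3⟩ := h
    have hsub : ({BB i k1, BB i k2, BB i k3} : Finset (Fin n ⊕ Fin n × Fin 5)) ⊆
        T.filter (fun v => ∃ k, v = BB i k) := by
      intro v hv
      rcases Finset.mem_insert.1 hv with rfl | hv
      · exact Finset.mem_filter.2 ⟨(hTmem _).2 h1, k1, rfl⟩
      rcases Finset.mem_insert.1 hv with rfl | hv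
      · exact Finset.mem_filter.2 ⟨(hTmem _).2 h2, k2, rfl⟩
      rw [Finset.mem_singleton] at hv; subst hv
      exact Finset.mem_filter.2 ⟨(hTmem _).2 h3.1, k3, rfl⟩
    have hc : ({BB i k1, BB i k2, BB i k3} : Finset (Fin n ⊕ Fin n × Fin 5)).card = 3 := by
      rw [Finset.card_insert_of_notMem, Finset.card_pair (BB_ne_BB h23)]
      simp only [Finset.mem_insert, Finset.mem_singleton]
      push_neg
      exact ⟨BB_ne_BB h12, BB_ne_BB h13⟩
    have hle : ({BB i k1, BB i k2, BB i k3} : Finset (Fin n ⊕ Fin n × Fin 5)).card ≤ m i :=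
      Finset.card_le_card hsub
    omega
  have hlight_of : ∀ i, ¬ 3 ≤ m i → LightPred S i := by
    intro i h
    by_contra hl
    exact h (hheavy_m i hl)
  -- the injection
  set Lset : Finset (Fin n) := Finset.univ.filter (fun i => ¬ 3 ≤ m i) with hLdef
  set Hset : Finset (Fin n) := Finset.univ.filter (fun i => 3 ≤ m i) with hHdef
  set f : Fin n → Fin n ⊕ Fin n × Fin 5 := fun i =>
    if h : zfRank (cycleConstr n) S (XX i) = 0 then XX i else F (XX i) h with hfdef
  set W : Finset (Fin n ⊕ Fin n × Fin 5) :=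
    (T.filter (fun v => ∃ j, v = XX j)) ∪ Hset.image (fun j => XX j) with hWdef
  have hsource : ∀ i, LightPred S i → ∀ h : zfRank (cycleConstr n) S (XX i) ≠ 0,
      ∃ j, F (XX i) h = XX j ∧ 3 ≤ m j := by
    intro i hl h
    obtain ⟨j, hj, hjl⟩ := light_source hn hS i hl hall h (hF1 _ h) (hF2 _ h) (hF3 _ h)
    refine ⟨j, hj, ?_⟩
    by_contra hc
    exact hjl (hlight_of j hc)
  have hmapsto : ∀ i ∈ Lset, f i ∈ W := by
    intro i hi
    rw [hLdef, Finset.mem_filter] at hi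
    by_cases h : zfRank (cycleConstr n) S (XX i) = 0
    · rw [hfdef]
      simp only [dif_pos h]
      refine Finset.mem_union_left _ (Finset.mem_filter.2 ⟨?_, i, rfl⟩)
      exact (hTmem _).2 ((zfRank_zero_iff (hiter _)).1 h)
    · obtain ⟨j, hj, hjH⟩ := hsource i (hlight_of i hi.2) h
      rw [hfdef]
      simp only [dif_neg h]
      rw [hj]
      exact Finset.mem_union_right _ (Finset.mem_image.2 ⟨j, by simp [hHdef, hjH], rfl⟩)
  have hinj : Set.InjOn f Lset := by
    intro i hi i' hi' hfe
    rw [Finset.coe_filter] at hi hi'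
    simp only [Set.mem_setOf_eq, Finset.mem_univ, true_and] at hi hi'
    by_cases h : zfRank (cycleConstr n) S (XX i) = 0 <;>
      by_cases h' : zfRank (cycleConstr n) S (XX i') = 0
    · rw [hfdef] at hfe
      simp only [dif_pos h, dif_pos h'] at hfe
      exact Sum.inl.inj hfe
    · rw [hfdef] at hfe
      simp only [dif_pos h, dif_neg h'] at hfe
      obtain ⟨j, hj, hjH⟩ := hsource i' (hlight_of i' hi') h'
      rw [hj] at hfe
      have : i = j := Sum.inl.inj hfe
      subst this
      exact absurd hjH hi
    · rw [hfdef] at hfe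
      simp only [dif_neg h, dif_pos h'] at hfe
      obtain ⟨j, hj, hjH⟩ := hsource i (hlight_of i hi) h
      rw [hj] at hfe
      have : j = i' := Sum.inl.inj hfe
      subst this
      exact absurd hjH hi'
    · rw [hfdef] at hfe
      simp only [dif_neg h, dif_neg h'] at hfe
      have ha2 : (cycleConstr n).Adj (F (XX i) h) (XX i') := by
        rw [hfe]; exact hF1 _ h'
      have hs2 : ∀ u, (cycleConstr n).Adj (F (XX i) h) u → u ≠ XX i' →
          u ∈ zfIter (cycleConstr n) S (zfRank (cycleConstr n) S (XX i') - 1) := by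
        rw [hfe]; exact hF3 _ h'
      exact Sum.inl.inj (forcer_inj h h' (hF1 _ h) ha2 (hF3 _ h) hs2)
  have hLW : Lset.card ≤ W.card := Finset.card_le_card_of_injOn f hmapsto hinj
  have hWcard : W.card ≤ t + Hset.card := by
    calc W.card ≤ (T.filter (fun v => ∃ j, v = XX j)).card + (Hset.image (fun j => XX j)).card :=
          Finset.card_union_le _ _
    _ ≤ t + Hset.card := by
        rw [htdef]
        exact Nat.add_le_add_left (Finset.card_image_le) t
  -- sums
  have hsum_split : ∑ i, m i = ∑ i ∈ Hset, m i + ∑ i ∈ Lset, m i := by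
    rw [hHdef, hLdef]
    exact (Finset.sum_filter_add_sum_filter_not _ _ _).symm
  have hsumH : 3 * Hset.card ≤ ∑ i ∈ Hset, m i := by
    rw [mul_comm]
    have := Finset.card_nsmul_le_sum Hset m 3
      (fun x hx => (Finset.mem_filter.1 hx).2)
    simpa [smul_eq_mul] using this
  have hsumL : 2 * Lset.card ≤ ∑ i ∈ Lset, m i := by
    rw [mul_comm]
    have := Finset.card_nsmul_le_sum Lset m 2 (fun x _ => hm2 x)
    simpa [smul_eq_mul] using this
  have hHL : Hset.card + Lset.card = n := by
    rw [hHdef, hLdef]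
    rw [Finset.card_filter_add_card_filter_not]
    simp
  have hncard : S.ncard = T.card := Set.ncard_eq_toFinset_card S S.toFinite
  rw [hncard]
  omega


end Graph

/-- For `n` divisible by `6`, the cycle construction `G_n` satisfies
`Z(G_n) ≥ (5/12)|V(G_n)|`. -/
theorem zeroForcingNumber_cycleConstr (n : ℕ) (hn : 6 ∣ n) :
    (5 / 12 : ℚ) * Nat.card (Fin n ⊕ Fin n × Fin 5) ≤
      zeroForcingNumber (cycleConstr n) := by
  rcases Nat.eq_zero_or_pos n with rfl | hpos
  · have h0 : Nat.card (Fin 0 ⊕ Fin 0 × Fin 5) = 0 := by simp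
    rw [h0]
    norm_num
  · have hn6 : 6 ≤ n := Nat.le_of_dvd hpos hn
    haveI : NeZero n := ⟨by omega⟩
    have hcard : Nat.card (Fin n ⊕ Fin n × Fin 5) = 6 * n := by
      simp [Nat.card_eq_fintype_card]
      ring
    have hXne : {k | ∃ S : Set (Fin n ⊕ Fin n × Fin 5),
        S.ncard = k ∧ IsZeroForcingSet (cycleConstr n) S}.Nonempty :=
      ⟨(Set.univ : Set (Fin n ⊕ Fin n × Fin 5)).ncard, Set.univ, rfl,
        fun v => .init v (Set.mem_univ v)⟩
    obtain ⟨S, hcardS, hZFS⟩ := Nat.sInf_mem hXne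
    have hkey : 5 * n ≤ 2 * S.ncard := main_bound hn6 hZFS
    rw [hcardS] at hkey
    rw [hcard]
    have : (5 * n : ℚ) ≤ 2 * (zeroForcingNumber (cycleConstr n) : ℚ) := by
      exact_mod_cast hkey
    push_cast
    linarith
end
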